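/- arXiv:2201.04554 — 9 statements merged into one kernel-verified Lean document; each statement's English description precedes it below -/
import Mathlib

section
/- Let j ≥ 5 and let 𝓔 be an Erdős j-configuration. Then every subset of w of its triples, with 2 ≤ w ≤ j−3, spans at least w+3 vertices. Equivalently, every set of v vertices of 𝓔 with 1 ≤ v ≤ j−4 touches (i.e., meets the vertex set of) at least v+1 of the triples of 𝓔. -/
open Finset

/-- An Erdős `j`-configuration: `j - 2` triples spanning exactly `j` vertices, such that
no set of `v` vertices with `3 < v < j` contains at least `v - 2` of the triples. -/
def IsErdosConfig {V : Type*} [DecidableEq V] (j : ℕ) (E : Finset (Finset V)) : Prop :=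
  (∀ t ∈ E, t.card = 3) ∧ E.card = j - 2 ∧ (E.sup id).card = j ∧
  ∀ W : Finset V, 3 < W.card → W.card < j → (E.filter fun t => t ⊆ W).card + 2 < W.card

/-- Minimality of Erdős configurations, part (1): every set of `w` triples with
`2 ≤ w ≤ j - 3` spans at least `w + 3` vertices; equivalently, every set of `v`
vertices with `1 ≤ v ≤ j - 4` touches at least `v + 1` of the triples. -/
theorem erdos_config_minimality_one {V : Type*} [DecidableEq V] (j : ℕ) (hj : 5 ≤ j)
    (E : Finset (Finset V)) (hE : IsErdosConfig j E) :
    (∀ S ⊆ E, 2 ≤ S.card → S.card ≤ j - 3 → S.card + 3 ≤ (S.sup id).card) ∧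
    ∀ W : Finset V, W ⊆ E.sup id → 1 ≤ W.card → W.card ≤ j - 4 →
      W.card + 1 ≤ (E.filter fun t => ∃ v ∈ W, v ∈ t).card := by
  obtain ⟨h3, hcard, hsup, hmin⟩ := hE
  constructor
  · intro S hSE h2 hle
    have hWsub : S.sup id ⊆ E.sup id := Finset.sup_mono hSE
    have hWle : (S.sup id).card ≤ j := hsup ▸ Finset.card_le_card hWsub
    obtain ⟨t₁, ht₁, t₂, ht₂, hne⟩ := Finset.one_lt_card.mp h2
    have hsub1 : t₁ ⊆ S.sup id := Finset.le_sup (f := id) ht₁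
    have hsub2 : t₂ ⊆ S.sup id := Finset.le_sup (f := id) ht₂
    have hc1 : t₁.card = 3 := h3 _ (hSE ht₁)
    have hc2 : t₂.card = 3 := h3 _ (hSE ht₂)
    have hint : (t₁ ∩ t₂).card < 3 := by
      by_contra h
      push_neg at h
      have h1 : t₁ ∩ t₂ = t₁ :=
        Finset.eq_of_subset_of_card_le Finset.inter_subset_left (by omega)
      have h2' : t₁ ⊆ t₂ := by rw [← h1]; exact Finset.inter_subset_right
      exact hne (Finset.eq_of_subset_of_card_le h2' (by omega))
    have hunion : 4 ≤ (t₁ ∪ t₂).card := by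
      have := Finset.card_union_add_card_inter t₁ t₂
      omega
    have h4 : 3 < (S.sup id).card := by
      have hsub : (t₁ ∪ t₂) ⊆ S.sup id := Finset.union_subset hsub1 hsub2
      have := Finset.card_le_card hsub
      omega
    rcases lt_or_eq_of_le hWle with hlt | heq
    · have hm := hmin (S.sup id) h4 hlt
      have hsubfilter : S ⊆ E.filter fun t => t ⊆ S.sup id := by
        intro t ht
        simp only [Finset.mem_filter]
        exact ⟨hSE ht, Finset.le_sup (f := id) ht⟩
      have := Finset.card_le_card hsubfilter
      omega
    · omega
  · intro W hW h1 hle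
    set U := (E.sup id) \ W with hU
    have hWj : W.card ≤ j := by rw [← hsup]; exact Finset.card_le_card hW
    have hUcard : U.card = j - W.card := by
      rw [hU, Finset.card_sdiff_of_subset hW, hsup]
    have hU4 : 3 < U.card := by omega
    have hUj : U.card < j := by omega
    have hm := hmin U hU4 hUj
    have hsplit := Finset.card_filter_add_card_filter_not
      (s := E) (p := fun t => ∃ v ∈ W, v ∈ t)
    have hsubset : (E.filter fun t => ¬ ∃ v ∈ W, v ∈ t) ⊆ E.filter fun t => t ⊆ U := by
      intro t ht
      simp only [Finset.mem_filter] at ht ⊢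
      refine ⟨ht.1, fun x hx => ?_⟩
      rw [hU, Finset.mem_sdiff]
      exact ⟨Finset.le_sup (f := id) ht.1 hx, fun hxW => ht.2 ⟨x, hxW, hx⟩⟩
    have := Finset.card_le_card hsubset
    omega
end

section
/- Let j ≥ 5 and let 𝓔 be an Erdős j-configuration. Then every subset of w of its triples, with 1 ≤ w ≤ j−2, spans at least w+2 vertices. Equivalently, every set of v vertices of 𝓔 with 0 ≤ v ≤ j−2 touches (i.e., meets the vertex set of) at least v of the triples of 𝓔. -/
open Finset

/-- Minimality of Erdős configurations, part (2): every set of `w` triples with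
`1 ≤ w ≤ j - 2` spans at least `w + 2` vertices; equivalently, every set of `v`
vertices with `0 ≤ v ≤ j - 2` touches at least `v` of the triples. -/
theorem erdos_config_minimality_two {V : Type*} [DecidableEq V] (j : ℕ) (hj : 5 ≤ j)
    (E : Finset (Finset V)) (hE : IsErdosConfig j E) :
    (∀ S ⊆ E, 1 ≤ S.card → S.card ≤ j - 2 → S.card + 2 ≤ (S.sup id).card) ∧
    ∀ W : Finset V, W ⊆ E.sup id → W.card ≤ j - 2 →
      W.card ≤ (E.filter fun t => ∃ v ∈ W, v ∈ t).card := by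
  obtain ⟨h3, hcard, hspan, hmin⟩ := hE
  have part1 : ∀ S ⊆ E, 1 ≤ S.card → S.card ≤ j - 2 → S.card + 2 ≤ (S.sup id).card := by
    intro S hSE hS1 hSj
    set W := S.sup id with hW
    have hsub : ∀ t ∈ S, t ⊆ W := fun t ht => le_sup (f := id) ht
    by_cases hWj : j ≤ W.card
    · omega
    push_neg at hWj
    by_cases hW3 : 3 < W.card
    · have hfil : S ⊆ E.filter fun t => t ⊆ W := by
        intro t ht
        exact mem_filter.mpr ⟨hSE ht, hsub t ht⟩
      have h1 := hmin W hW3 hWj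
      have h2 := card_le_card hfil
      omega
    · push_neg at hW3
      obtain ⟨t, ht⟩ := card_pos.mp hS1
      have ht3 : t.card = 3 := h3 t (hSE ht)
      have hWc : W.card = 3 := le_antisymm hW3 (ht3 ▸ card_le_card (hsub t ht))
      have hSsing : S ⊆ {W} := by
        intro s hs
        have hs3 : s.card = 3 := h3 s (hSE hs)
        have : s = W := eq_of_subset_of_card_le (hsub s hs) (by omega)
        simp [this]
      have := card_le_card hSsing
      simp at this
      omega
  refine ⟨part1, ?_⟩
  intro W hWsub hWj
  set F := E.filter fun t => ∃ v ∈ W, v ∈ t with hF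
  set G := E.filter fun t => ¬ ∃ v ∈ W, v ∈ t with hG
  have hFG : F.card + G.card = E.card := card_filter_add_card_filter_not _
  by_cases hGe : G = ∅
  · rw [hGe] at hFG
    simp at hFG
    omega
  · have hG1 : 1 ≤ G.card := card_pos.mpr (nonempty_of_ne_empty hGe)
    have hGE : G ⊆ E := filter_subset _ _
    have hGj : G.card ≤ j - 2 := hcard ▸ card_le_card hGE
    have h1 := part1 G hGE hG1 hGj
    have hdisj : Disjoint (G.sup id) W := by
      rw [disjoint_left]
      intro v hv hvW
      obtain ⟨t, ht, hvt⟩ := mem_sup.mp hv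
      exact (mem_filter.mp ht).2 ⟨v, hvW, hvt⟩
    have hsub2 : G.sup id ∪ W ⊆ E.sup id := union_subset (sup_mono hGE) hWsub
    have h2 := card_le_card hsub2
    rw [card_union_of_disjoint hdisj] at h2
    omega
end

section
/- Let (X(0), …, X(m)) be a supermartingale with respect to a filtration F(0) ⊆ F(1) ⊆ ⋯ ⊆ F(m). Suppose that |X(i+1) − X(i)| ≤ K and E[|X(i+1) − X(i)| | F(i)] ≤ D for all 0 ≤ i < m. Then for any t > 0, Pr[X(m) ≥ X(0) + t] ≤ exp(−t² / (2mKD + 2Kt)). -/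
/-!
For `0 ≤ l` with `l K < 1`, an increment `Δ` with `|Δ| ≤ K` satisfies
`exp (l Δ) ≤ 1 + l Δ + l² Δ² / (2 (1 - l K))`. Conditionally on `ℱ i` the linear term has
nonpositive mean by the supermartingale property, and `E[Δ² | ℱ i] ≤ K E[|Δ| | ℱ i] ≤ K D`, so
`E[exp (l Δ) | ℱ i] ≤ exp (l² K D / (2 (1 - l K)))`. Multiplying these one-step bounds along the
filtration bounds `E[exp (l (X m - X 0))]`, and the Chernoff bound at `l = t / (m K D + K t)`
yields the exponent `-t² / (2 m K D + 2 K t)`.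
-/

open MeasureTheory Real

lemma Real.exp_le_one_add_add_sq_div_of_abs_le {x u : ℝ} (hxu : |x| ≤ u) (hu : u < 1) :
    exp x ≤ 1 + x + x ^ 2 / (2 * (1 - u)) := by
  have hu0 : 0 ≤ u := (abs_nonneg x).trans hxu
  have htaylor : exp x - (1 + x + x ^ 2 / 2) ≤ |x| ^ 3 * (2 / 9) := by
    have h := (abs_sub_le_iff.1 (exp_bound (hxu.trans hu.le) (n := 3) (by norm_num))).1
    norm_num [Finset.sum_range_succ, Nat.factorial] at h
    linarith
  have hcube : |x| ^ 3 ≤ u * x ^ 2 := by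
    rw [pow_succ', sq_abs]
    exact mul_le_mul_of_nonneg_right hxu (sq_nonneg _)
  have hcoef : 1 / 2 + 2 / 9 * u ≤ 1 / (2 * (1 - u)) := by
    rw [le_div_iff₀ (by linarith)]
    nlinarith
  calc exp x ≤ 1 + x + x ^ 2 * (1 / 2 + 2 / 9 * u) := by nlinarith
    _ ≤ 1 + x + x ^ 2 / (2 * (1 - u)) := by
      rw [div_eq_mul_one_div (x ^ 2)]
      gcongr

lemma exists_exponent_eq_bernstein {A K t : ℝ} (hA : 0 < A) (hK : 0 ≤ K) (ht : 0 ≤ t) :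
    ∃ l, 0 ≤ l ∧ l * K < 1 ∧
      l ^ 2 * A / (2 * (1 - l * K)) - l * t = -t ^ 2 / (2 * A + 2 * K * t) := by
  have hpos : 0 < A + K * t := by positivity
  have hone_sub : 1 - t / (A + K * t) * K = A / (A + K * t) := by field_simp; ring
  refine ⟨t / (A + K * t), by positivity, ?_, ?_⟩
  · rw [← sub_pos, hone_sub]
    positivity
  · rw [hone_sub]
    field_simp
    ring

namespace MeasureTheory

variable {Ω : Type*} {m m0 : MeasurableSpace Ω} {μ : Measure Ω}

theorem Supermartingale.condExp_sub_nonpos {E ι : Type*} [Preorder ι] {ℱ : Filtration ι m0}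
    [NormedAddCommGroup E] [NormedSpace ℝ E] [CompleteSpace E]
    [PartialOrder E] [IsOrderedAddMonoid E]
    {f : ι → Ω → E} (hf : Supermartingale f ℱ μ) {i j : ι} (hij : i ≤ j) :
    μ[f j - f i | ℱ i] ≤ᵐ[μ] 0 := by
  filter_upwards [hf.neg.condExp_sub_nonneg hij, condExp_neg (f j - f i) (ℱ i)]
    with ω hpos hneg
  rw [show (-f) j - (-f) i = -(f j - f i) by simp only [Pi.neg_apply, neg_sub_neg, neg_sub],
    hneg] at hpos
  simpa using hpos

section

variable {f : Ω → ℝ} {K D : ℝ}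

theorem Integrable.sq_of_abs_le (hf : Integrable f μ) (hbdd : ∀ᵐ ω ∂μ, |f ω| ≤ K) :
    Integrable (f ^ 2) μ :=
  (hf.mul_bdd hf.aestronglyMeasurable (c := K) (by simpa using hbdd)).congr
    (.of_forall fun ω => (sq (f ω)).symm)

theorem condExp_sq_le_mul_of_abs_le (hf : Integrable f μ) (hbdd : ∀ᵐ ω ∂μ, |f ω| ≤ K)
    (habs : μ[fun ω => |f ω| | m] ≤ᵐ[μ] fun _ => D) :
    μ[f ^ 2 | m] ≤ᵐ[μ] fun _ => K * D := by
  have hsq_le : f ^ 2 ≤ᵐ[μ] fun ω => K * |f ω| := by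
    filter_upwards [hbdd] with ω hω
    rw [Pi.pow_apply, ← sq_abs, sq]
    exact mul_le_mul_of_nonneg_right hω (abs_nonneg _)
  filter_upwards [condExp_mono (hf.sq_of_abs_le hbdd) (hf.abs.const_mul K) hsq_le,
    condExp_smul (m := m) (μ := μ) K fun ω => |f ω|, habs, hbdd] with ω hmono hsmul hD hK
  calc μ[f ^ 2 | m] ω ≤ K * μ[fun ω => |f ω| | m] ω := hmono.trans_eq hsmul
    _ ≤ K * D := mul_le_mul_of_nonneg_left hD ((abs_nonneg _).trans hK)

theorem condExp_exp_mul_le [IsFiniteMeasure μ] (hm : m ≤ m0) (hf : Integrable f μ) {l : ℝ}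
    (hl : 0 ≤ l) (hlK : l * K < 1) (hbdd : ∀ᵐ ω ∂μ, |f ω| ≤ K) (hmean : μ[f | m] ≤ᵐ[μ] 0)
    (habs : μ[fun ω => |f ω| | m] ≤ᵐ[μ] fun _ => D) :
    μ[fun ω => exp (l * f ω) | m] ≤ᵐ[μ] fun _ => exp (l ^ 2 * K * D / (2 * (1 - l * K))) := by
  set a := l ^ 2 / (2 * (1 - l * K)) with ha_def
  have ha : 0 ≤ a := div_nonneg (sq_nonneg l) (by linarith)
  have hsq_int := hf.sq_of_abs_le hbdd
  have hexp_le : (fun ω => exp (l * f ω)) ≤ᵐ[μ] 1 + l • f + a • f ^ 2 := by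
    filter_upwards [hbdd] with ω hω
    have hlf : |l * f ω| ≤ l * K := by
      rw [abs_mul, abs_of_nonneg hl]
      exact mul_le_mul_of_nonneg_left hω hl
    calc exp (l * f ω) ≤ 1 + l * f ω + (l * f ω) ^ 2 / (2 * (1 - l * K)) :=
          exp_le_one_add_add_sq_div_of_abs_le hlf hlK
      _ = (1 + l • f + a • f ^ 2 : Ω → ℝ) ω := by simp only [Pi.add_apply, Pi.one_apply,
          Pi.smul_apply, Pi.pow_apply, smul_eq_mul, ha_def]; ring
  have hexp_int : Integrable (fun ω => exp (l * f ω)) μ := by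
    refine .of_bound (continuous_exp.comp_aestronglyMeasurable (hf.1.const_mul l))
      (exp (l * K)) ?_
    filter_upwards [hbdd] with ω hω
    rw [norm_of_nonneg (exp_pos _).le, exp_le_exp]
    exact mul_le_mul_of_nonneg_left ((le_abs_self _).trans hω) hl
  have hquad : μ[1 + l • f + a • f ^ 2 | m] =ᵐ[μ] 1 + l • μ[f | m] + a • μ[f ^ 2 | m] := by
    have hone : μ[1 | m] = 1 := condExp_const hm (1 : ℝ)
    calc μ[1 + l • f + a • f ^ 2 | m]
        =ᵐ[μ] μ[1 + l • f | m] + μ[a • f ^ 2 | m] :=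
          condExp_add ((integrable_const 1).add (hf.smul l)) (hsq_int.smul a) m
      _ =ᵐ[μ] μ[1 | m] + μ[l • f | m] + a • μ[f ^ 2 | m] :=
          (condExp_add (integrable_const 1) (hf.smul l) m).add (condExp_smul a _ m)
      _ =ᵐ[μ] 1 + l • μ[f | m] + a • μ[f ^ 2 | m] := by
          rw [hone]
          exact (Filter.EventuallyEq.rfl.add (condExp_smul l f m)).add .rfl
  filter_upwards [condExp_mono (m := m) hexp_int
    (((integrable_const 1).add (hf.smul l)).add (hsq_int.smul a)) hexp_le, hquad, hmean,
    condExp_sq_le_mul_of_abs_le hf hbdd habs] with ω hmono hlin hneg hsq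
  simp only [Pi.add_apply, Pi.one_apply, Pi.smul_apply, smul_eq_mul, Pi.zero_apply] at hlin hneg
  calc μ[fun ω => exp (l * f ω) | m] ω ≤ 1 + l * μ[f | m] ω + a * μ[f ^ 2 | m] ω :=
        hmono.trans_eq hlin
    _ ≤ a * (K * D) + 1 := by
        nlinarith [mul_nonpos_of_nonneg_of_nonpos hl hneg, mul_le_mul_of_nonneg_left hsq ha]
    _ ≤ exp (l ^ 2 * K * D / (2 * (1 - l * K))) := by
        rw [ha_def, show l ^ 2 / (2 * (1 - l * K)) * (K * D) = l ^ 2 * K * D / (2 * (1 - l * K))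
          by ring]
        exact add_one_le_exp _

end

variable [IsProbabilityMeasure μ] {ℱ : Filtration ℕ m0} {X : ℕ → Ω → ℝ}

theorem StronglyAdapted.integral_exp_mul_sub_le (hX : StronglyAdapted ℱ X) {K l b : ℝ} {n : ℕ}
    (hbdd : ∀ i < n, ∀ᵐ ω ∂μ, |X (i + 1) ω - X i ω| ≤ K)
    (hstep : ∀ i < n, μ[fun ω => exp (l * (X (i + 1) ω - X i ω)) | ℱ i] ≤ᵐ[μ] fun _ => exp b) :
    Integrable (fun ω => exp (l * (X n ω - X 0 ω))) μ ∧
      ∫ ω, exp (l * (X n ω - X 0 ω)) ∂μ ≤ exp (n * b) := by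
  induction n with
  | zero => simp
  | succ n ih =>
    obtain ⟨hY_int, hY_le⟩ := ih (fun i hi => hbdd i (by omega)) (fun i hi => hstep i (by omega))
    set Y := fun ω => exp (l * (X n ω - X 0 ω))
    set Z := fun ω => exp (l * (X (n + 1) ω - X n ω))
    have hYZ : (fun ω => exp (l * (X (n + 1) ω - X 0 ω))) = Y * Z := by
      ext ω
      simp only [Pi.mul_apply, Y, Z, ← exp_add]
      ring_nf
    have hY_meas : StronglyMeasurable[ℱ n] Y := continuous_exp.comp_stronglyMeasurable
      (((hX n).sub ((hX 0).mono (ℱ.mono n.zero_le))).const_mul l)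
    have hZ_meas : StronglyMeasurable[m0] Z := continuous_exp.comp_stronglyMeasurable
      ((((hX (n + 1)).mono (ℱ.le _) : StronglyMeasurable[m0] (X (n + 1))).sub
        ((hX n).mono (ℱ.le _))).const_mul l)
    have hZ_bdd : ∀ᵐ ω ∂μ, ‖Z ω‖ ≤ exp (|l| * K) := by
      filter_upwards [hbdd n n.lt_succ_self] with ω hω
      rw [norm_of_nonneg (exp_pos _).le, exp_le_exp]
      calc l * (X (n + 1) ω - X n ω) ≤ |l| * |X (n + 1) ω - X n ω| :=
            (le_abs_self _).trans (abs_mul _ _).le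
        _ ≤ |l| * K := mul_le_mul_of_nonneg_left hω (abs_nonneg l)
    have hZ_int : Integrable Z μ := .of_bound hZ_meas.aestronglyMeasurable _ hZ_bdd
    have hYZ_int : Integrable (Y * Z) μ := hY_int.mul_bdd hZ_meas.aestronglyMeasurable hZ_bdd
    have hcond : μ[Y * Z | ℱ n] ≤ᵐ[μ] fun ω => Y ω * exp b := by
      filter_upwards [condExp_mul_of_stronglyMeasurable_left hY_meas hYZ_int hZ_int,
        hstep n n.lt_succ_self] with ω hpull hZ
      rw [hpull]
      exact mul_le_mul_of_nonneg_left hZ (exp_pos _).le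
    refine ⟨hYZ ▸ hYZ_int, ?_⟩
    rw [hYZ]
    calc ∫ ω, (Y * Z) ω ∂μ = ∫ ω, μ[Y * Z | ℱ n] ω ∂μ := (integral_condExp (ℱ.le n)).symm
      _ ≤ ∫ ω, Y ω * exp b ∂μ := integral_mono_ae integrable_condExp (hY_int.mul_const _) hcond
      _ = (∫ ω, Y ω ∂μ) * exp b := integral_mul_const _ _
      _ ≤ exp (n * b) * exp b := by gcongr
      _ = exp ((n + 1 : ℕ) * b) := by rw [← exp_add]; push_cast; ring_nf

theorem Supermartingale.measureReal_add_le_le_exp (hX : Supermartingale X ℱ μ) {n : ℕ}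
    {K D l : ℝ} (t : ℝ) (hl : 0 ≤ l) (hlK : l * K < 1)
    (hbdd : ∀ i < n, ∀ᵐ ω ∂μ, |X (i + 1) ω - X i ω| ≤ K)
    (hdev : ∀ i < n, μ[fun ω => |X (i + 1) ω - X i ω| | ℱ i] ≤ᵐ[μ] fun _ => D) :
    μ.real {ω | X 0 ω + t ≤ X n ω} ≤ exp (n * (l ^ 2 * K * D / (2 * (1 - l * K))) - l * t) := by
  obtain ⟨hint, hmgf⟩ := hX.stronglyAdapted.integral_exp_mul_sub_le hbdd fun i hi =>
    condExp_exp_mul_le (ℱ.le i) ((hX.integrable _).sub (hX.integrable _)) hl hlK (hbdd i hi)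
      (hX.condExp_sub_nonpos i.le_succ) (hdev i hi)
  have hset : {ω | X 0 ω + t ≤ X n ω} = {ω | t ≤ (X n - X 0) ω} := by
    ext ω
    simp only [Set.mem_ofPred_eq, Pi.sub_apply, le_sub_iff_add_le']
  calc μ.real {ω | X 0 ω + t ≤ X n ω} ≤ exp (-l * t) * ProbabilityTheory.mgf (X n - X 0) μ l :=
        hset ▸ ProbabilityTheory.measure_ge_le_exp_mul_mgf t hl hint
    _ ≤ exp (-l * t) * exp (n * (l ^ 2 * K * D / (2 * (1 - l * K)))) := by
        gcongr
        exact hmgf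
    _ = exp (n * (l ^ 2 * K * D / (2 * (1 - l * K))) - l * t) := by rw [← exp_add]; ring_nf

end MeasureTheory

/-- Corollary of Freedman's inequality: if `(X 0, …, X m)` is a supermartingale with
respect to the filtration `ℱ`, with one-step differences bounded by `K` and with
conditional expected absolute one-step differences bounded by `D`, then for any `t > 0`,
`Pr[X m ≥ X 0 + t] ≤ exp (-t² / (2 m K D + 2 K t))`. -/
theorem freedman_corollary {Ω : Type*} {m0 : MeasurableSpace Ω} {μ : Measure Ω}
    [IsProbabilityMeasure μ] (ℱ : Filtration ℕ m0) (X : ℕ → Ω → ℝ)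
    (hX : Supermartingale X ℱ μ) (m : ℕ) (K D t : ℝ) (hK : 0 < K) (hD : 0 < D)
    (ht : 0 < t)
    (hbdd : ∀ i < m, ∀ᵐ ω ∂μ, |X (i + 1) ω - X i ω| ≤ K)
    (hdev : ∀ i < m, ∀ᵐ ω ∂μ,
      MeasureTheory.condExp (ℱ i) μ (fun ω' => |X (i + 1) ω' - X i ω'|) ω ≤ D) :
    μ {ω | X 0 ω + t ≤ X m ω} ≤
      ENNReal.ofReal (Real.exp (-t ^ 2 / (2 * m * K * D + 2 * K * t))) := by
  rcases m.eq_zero_or_pos with rfl | hm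
  · simp [not_le.2 ht]
  obtain ⟨l, hl, hlK, hexponent⟩ :=
    exists_exponent_eq_bernstein (A := m * K * D) (by positivity) hK.le ht.le
  have hbound := hX.measureReal_add_le_le_exp t hl hlK hbdd hdev
  rw [← ofReal_measureReal]
  refine ENNReal.ofReal_le_ofReal (hbound.trans_eq ?_)
  congr 1
  convert hexponent using 1 <;> ring
end

section
/- Fix an integer g > 2. Let T be a triple of vertices with an appended g-sphere, and let 𝓑^○(T) be the set of triangles of its in- and out-decompositions. Let 𝓔 ⊆ 𝓑^○(T) be a nonempty set of at most g pairwise edge-disjoint triangles. Then there is a vertex v ∈ V(𝓑^○(T)) ∖ V(T) which appears in exactly one of the triangles in 𝓔. -/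
open Finset

/-- The set `𝓑^○(T)` of triangles of the in- and out-decompositions of the `g`-sphere
appended to a triple `T` with vertices `a, b 1, b 2` and new vertices
`b 3, …, b (2g), c`.  The out-decomposition consists of the triangles
`{c, b i, b (i+1)}` for even `2 ≤ i ≤ 2g` and `{a, b i, b (i+1)}` for odd such `i`
(indices cyclic, `b (2g+1) = b 1`); the in-decomposition consists of
`{c, b i, b (i+1)}` for odd `1 ≤ i ≤ 2g` and `{a, b i, b (i+1)}` for even such `i`. -/
def sphereB {V : Type*} [DecidableEq V] (g : ℕ) (a c : V) (b : ℕ → V) :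
    Finset (Finset V) :=
  ((Finset.Icc 2 (2 * g)).image fun i =>
    ({if i % 2 = 0 then c else a, b i, b (if i = 2 * g then 1 else i + 1)} : Finset V)) ∪
  ((Finset.Icc 1 (2 * g)).image fun i =>
    ({if i % 2 = 1 then c else a, b i, b (if i = 2 * g then 1 else i + 1)} : Finset V))


/-- cyclic successor on `{1, …, 2g}` -/
def scc (g i : ℕ) : ℕ := if i = 2 * g then 1 else i + 1

lemma scc_mem {g i : ℕ} (h1 : 1 ≤ i) (h2 : i ≤ 2 * g) :
    1 ≤ scc g i ∧ scc g i ≤ 2 * g := by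
  simp only [scc]; split_ifs <;> omega

lemma scc_ne {g i : ℕ} (h1 : 1 ≤ i) (h2 : i ≤ 2 * g) : scc g i ≠ i := by
  simp only [scc]; split_ifs <;> omega

lemma scc_scc_ne {g i : ℕ} (hg : 2 ≤ g) (h1 : 1 ≤ i) (h2 : i ≤ 2 * g) :
    scc g (scc g i) ≠ i := by
  simp only [scc]; split_ifs <;> omega

lemma sphereB_elim {V : Type*} [DecidableEq V] {g : ℕ} {a c : V} {b : ℕ → V}
    {t : Finset V} (ht : t ∈ sphereB g a c b) :
    ∃ i, 1 ≤ i ∧ i ≤ 2 * g ∧ ∃ x, (x = a ∨ x = c) ∧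
      t = {x, b i, b (scc g i)} ∧ (i = 1 → x = c) := by
  simp only [sphereB, mem_union, mem_image, mem_Icc] at ht
  rcases ht with ⟨i, ⟨hi1, hi2⟩, ht⟩ | ⟨i, ⟨hi1, hi2⟩, ht⟩
  · refine ⟨i, by omega, hi2, if i % 2 = 0 then c else a, ?_, ?_, ?_⟩
    · split <;> simp
    · rw [← ht]; rfl
    · intro h; omega
  · refine ⟨i, hi1, hi2, if i % 2 = 1 then c else a, ?_, ?_, ?_⟩
    · split <;> simp
    · rw [← ht]; rfl
    · intro h; subst h; simp

lemma mem_tri {V : Type*} [DecidableEq V] {g : ℕ} {a c : V} {b : ℕ → V}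
    (hbinj : ∀ i ∈ Finset.Icc 1 (2 * g), ∀ j ∈ Finset.Icc 1 (2 * g), b i = b j → i = j)
    (hdist : ∀ i ∈ Finset.Icc 1 (2 * g), b i ≠ a ∧ b i ≠ c)
    {i j : ℕ} (hi1 : 1 ≤ i) (hi2 : i ≤ 2 * g) (hj1 : 1 ≤ j) (hj2 : j ≤ 2 * g)
    {x : V} (hx : x = a ∨ x = c) :
    b j ∈ ({x, b i, b (scc g i)} : Finset V) ↔ j = i ∨ j = scc g i := by
  have hsi := scc_mem hi1 hi2
  constructor
  · intro h
    simp only [mem_insert, mem_singleton] at h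
    rcases h with h | h | h
    · exfalso
      rcases hx with rfl | rfl
      · exact (hdist j (mem_Icc.mpr ⟨hj1, hj2⟩)).1 h
      · exact (hdist j (mem_Icc.mpr ⟨hj1, hj2⟩)).2 h
    · exact Or.inl (hbinj j (mem_Icc.mpr ⟨hj1, hj2⟩) i (mem_Icc.mpr ⟨hi1, hi2⟩) h)
    · exact Or.inr (hbinj j (mem_Icc.mpr ⟨hj1, hj2⟩) (scc g i)
        (mem_Icc.mpr ⟨hsi.1, hsi.2⟩) h)
  · rintro (rfl | rfl) <;> simp

lemma tri_index_eq {V : Type*} [DecidableEq V] {g : ℕ} (hg : 2 ≤ g) {a c : V} {b : ℕ → V}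
    (hbinj : ∀ i ∈ Finset.Icc 1 (2 * g), ∀ j ∈ Finset.Icc 1 (2 * g), b i = b j → i = j)
    (hdist : ∀ i ∈ Finset.Icc 1 (2 * g), b i ≠ a ∧ b i ≠ c)
    {i j : ℕ} (hi1 : 1 ≤ i) (hi2 : i ≤ 2 * g) (hj1 : 1 ≤ j) (hj2 : j ≤ 2 * g)
    {x y : V} (hx : x = a ∨ x = c) (hy : y = a ∨ y = c)
    (heq : ({x, b i, b (scc g i)} : Finset V) = {y, b j, b (scc g j)}) : i = j := by
  have h1 : b i ∈ ({y, b j, b (scc g j)} : Finset V) := by rw [← heq]; simp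
  have h2 : b j ∈ ({x, b i, b (scc g i)} : Finset V) := by rw [heq]; simp
  rw [mem_tri hbinj hdist hj1 hj2 hi1 hi2 hy] at h1
  rw [mem_tri hbinj hdist hi1 hi2 hj1 hj2 hx] at h2
  rcases h1 with h1 | h1
  · exact h1
  rcases h2 with h2 | h2
  · exact h2.symm
  exfalso
  have h3 := scc_scc_ne hg hi1 hi2
  rw [← h2] at h3
  exact h3 h1.symm

/-- In a `g`-sphere appended to the triple `T = {a, b 1, b 2}`, any nonempty set `𝓔` of
at most `g` pairwise edge-disjoint triangles from `𝓑^○(T)` has a vertex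
`v ∈ V(𝓑^○(T)) ∖ V(T)` appearing in exactly one of its triangles. -/
theorem sphere_private_vertex {V : Type*} [DecidableEq V] (g : ℕ) (hg : 2 < g)
    (a c : V) (b : ℕ → V)
    (hbinj : ∀ i ∈ Finset.Icc 1 (2 * g), ∀ j ∈ Finset.Icc 1 (2 * g), b i = b j → i = j)
    (hdist : ∀ i ∈ Finset.Icc 1 (2 * g), b i ≠ a ∧ b i ≠ c) (hac : a ≠ c)
    (E : Finset (Finset V)) (hEsub : E ⊆ sphereB g a c b) (hne : E.Nonempty)
    (hcard : E.card ≤ g)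
    (hdisj : ∀ t₁ ∈ E, ∀ t₂ ∈ E, t₁ ≠ t₂ → (t₁ ∩ t₂).card ≤ 1) :
    ∃ v ∈ (sphereB g a c b).sup id \ ({a, b 1, b 2} : Finset V),
      (E.filter fun t => v ∈ t).card = 1 := by
  classical
  have hg2 : 2 ≤ g := by omega
  -- each t ∈ E has an index
  have hET : ∀ t ∈ E, ∃ i, 1 ≤ i ∧ i ≤ 2 * g ∧ ∃ x, (x = a ∨ x = c) ∧
      t = {x, b i, b (scc g i)} ∧ (i = 1 → x = c) :=
    fun t ht => sphereB_elim (hEsub ht)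
  -- at most one triangle of E per index
  have hOne : ∀ j, 1 ≤ j → j ≤ 2 * g → ∀ t₁ ∈ E, ∀ t₂ ∈ E,
      (∃ x, (x = a ∨ x = c) ∧ t₁ = {x, b j, b (scc g j)}) →
      (∃ y, (y = a ∨ y = c) ∧ t₂ = {y, b j, b (scc g j)}) → t₁ = t₂ := by
    intro j hj1 hj2 t₁ ht₁ t₂ ht₂ ⟨x, hx, hxt⟩ ⟨y, hy, hyt⟩
    by_contra hne'
    have hbne : b j ≠ b (scc g j) := by
      intro h
      have hsj := scc_mem hj1 hj2
      have := hbinj j (mem_Icc.mpr ⟨hj1, hj2⟩) (scc g j) (mem_Icc.mpr ⟨hsj.1, hsj.2⟩) h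
      exact scc_ne hj1 hj2 this.symm
    have h2 : 1 < (t₁ ∩ t₂).card := by
      refine Finset.one_lt_card.mpr ⟨b j, ?_, b (scc g j), ?_, hbne⟩ <;>
        simp [hxt, hyt, Finset.mem_inter]
    exact absurd (hdisj t₁ ht₁ t₂ ht₂ hne') (by omega)
  -- the set of occupied indices
  set S : Finset ℕ := (Finset.Icc 1 (2 * g)).filter
    (fun j => ∃ t ∈ E, ∃ x, (x = a ∨ x = c) ∧ t = {x, b j, b (scc g j)}) with hS
  have hSmem : ∀ j ∈ S, 1 ≤ j ∧ j ≤ 2 * g := by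
    intro j hj; rw [hS, mem_filter, mem_Icc] at hj; exact hj.1
  -- |S| ≤ |E|
  have hSE : S.card ≤ E.card := by
    set F : ℕ → Finset V := fun j =>
      if h : ∃ t ∈ E, ∃ x, (x = a ∨ x = c) ∧ t = {x, b j, b (scc g j)}
      then h.choose else ∅ with hF
    have hFspec : ∀ j ∈ S, F j ∈ E ∧ ∃ x, (x = a ∨ x = c) ∧ F j = {x, b j, b (scc g j)} := by
      intro j hj
      rw [hS, mem_filter] at hj
      rw [hF]; simp only [dif_pos hj.2]
      exact hj.2.choose_spec
    refine Finset.card_le_card_of_injOn F (fun j hj => (hFspec j hj).1) ?_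
    intro j₁ hj₁ j₂ hj₂ hFe
    obtain ⟨-, x₁, hx₁, he₁⟩ := hFspec j₁ hj₁
    obtain ⟨-, x₂, hx₂, he₂⟩ := hFspec j₂ hj₂
    exact tri_index_eq hg2 hbinj hdist (hSmem j₁ hj₁).1 (hSmem j₁ hj₁).2
      (hSmem j₂ hj₂).1 (hSmem j₂ hj₂).2 hx₁ hx₂ (he₁.symm.trans (hFe ▸ he₂))
  by_cases hex : ∃ j, 3 ≤ j ∧ j ≤ 2 * g ∧ ¬((j - 1 ∈ S) ↔ (j ∈ S))
  · obtain ⟨j, hj3, hj2g, hiff⟩ := hex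
    -- the private vertex is b j
    refine ⟨b j, ?_, ?_⟩
    · rw [Finset.mem_sdiff]
      constructor
      · refine Finset.mem_sup.mpr ⟨({(if j % 2 = 1 then c else a), b j, b (scc g j)} : Finset V), ?_, by simp⟩
        simp only [sphereB, mem_union, mem_image, mem_Icc]
        right
        exact ⟨j, ⟨by omega, hj2g⟩, rfl⟩
      · simp only [mem_insert, mem_singleton, not_or]
        refine ⟨(hdist j (mem_Icc.mpr ⟨by omega, hj2g⟩)).1, ?_, ?_⟩
        · intro h; have := hbinj j (mem_Icc.mpr ⟨by omega, hj2g⟩) 1 (mem_Icc.mpr ⟨le_refl 1, by omega⟩) h; omega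
        · intro h; have := hbinj j (mem_Icc.mpr ⟨by omega, hj2g⟩) 2 (mem_Icc.mpr ⟨by omega, by omega⟩) h; omega
    · -- count triangles containing b j
      have hsccj : scc g (j - 1) = j := by simp only [scc]; split_ifs <;> omega
      -- index of any t containing b j is j-1 or j
      have hidx : ∀ t ∈ E, b j ∈ t →
          (∃ x, (x = a ∨ x = c) ∧ t = {x, b (j-1), b (scc g (j-1))}) ∨
          (∃ x, (x = a ∨ x = c) ∧ t = {x, b j, b (scc g j)}) := by
        intro t ht hbj
        obtain ⟨i, hi1, hi2, x, hx, hte, -⟩ := hET t ht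
        rw [hte] at hbj
        rw [mem_tri hbinj hdist hi1 hi2 (by omega) hj2g hx] at hbj
        rcases hbj with rfl | hbj
        · exact Or.inr ⟨x, hx, hte⟩
        · have : i = j - 1 := by
            simp only [scc] at hbj; split_ifs at hbj <;> omega
          subst this
          exact Or.inl ⟨x, hx, hte⟩
      have hSwit : ∀ k, 1 ≤ k → k ≤ 2 * g →
          (∃ t ∈ E, ∃ x, (x = a ∨ x = c) ∧ t = {x, b k, b (scc g k)}) → k ∈ S := by
        intro k h1 h2 h3
        rw [hS, mem_filter, mem_Icc]; exact ⟨⟨h1, h2⟩, h3⟩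
      rw [Finset.card_eq_one]
      by_cases hjm : j - 1 ∈ S
      · -- j-1 ∈ S, j ∉ S
        have hjn : j ∉ S := fun h => hiff ⟨fun _ => h, fun _ => hjm⟩
        rw [hS, mem_filter] at hjm
        obtain ⟨-, t₀, ht₀E, x₀, hx₀, ht₀⟩ := hjm
        refine ⟨t₀, ?_⟩
        ext t
        simp only [mem_filter, mem_singleton]
        constructor
        · rintro ⟨htE, hbj⟩
          rcases hidx t htE hbj with ⟨x, hx, hte⟩ | ⟨x, hx, hte⟩
          · exact hOne (j-1) (by omega) (by omega) t htE t₀ ht₀E ⟨x, hx, hte⟩ ⟨x₀, hx₀, ht₀⟩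
          · exact absurd (hSwit j (by omega) hj2g ⟨t, htE, x, hx, hte⟩) hjn
        · rintro rfl
          refine ⟨ht₀E, ?_⟩
          rw [ht₀, hsccj]; simp
      · -- j ∈ S, j-1 ∉ S
        have hjn : j ∈ S := by
          by_contra h
          exact hiff ⟨fun h' => absurd h' hjm, fun h' => absurd h' h⟩
        rw [hS, mem_filter] at hjn
        obtain ⟨-, t₀, ht₀E, x₀, hx₀, ht₀⟩ := hjn
        refine ⟨t₀, ?_⟩
        ext t
        simp only [mem_filter, mem_singleton]
        constructor
        · rintro ⟨htE, hbj⟩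
          rcases hidx t htE hbj with ⟨x, hx, hte⟩ | ⟨x, hx, hte⟩
          · exact absurd (hSwit (j-1) (by omega) (by omega) ⟨t, htE, x, hx, hte⟩) hjm
          · exact hOne j (by omega) hj2g t htE t₀ ht₀E ⟨x, hx, hte⟩ ⟨x₀, hx₀, ht₀⟩
        · rintro rfl
          exact ⟨ht₀E, by rw [ht₀]; simp⟩
  · -- no alternation on [2, 2g]
    push_neg at hex
    have hconst : ∀ j, 3 ≤ j → j ≤ 2 * g → ((j - 1 ∈ S) ↔ (j ∈ S)) :=
      fun j h1 h2 => hex j h1 h2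
    by_cases h2S : 2 ∈ S
    · exfalso
      have hall : ∀ j, 2 ≤ j → j ≤ 2 * g → j ∈ S := by
        intro j
        induction j with
        | zero => omega
        | succ k ih =>
          intro h2 hle
          rcases Nat.lt_or_ge k 2 with hk | hk
          · have hk1 : k + 1 = 2 := by omega
            rw [hk1]; exact h2S
          · have hkS := ih (by omega) (by omega)
            have := (hconst (k+1) (by omega) hle).mp (by simpa using hkS)
            exact this
      have hsub : Finset.Icc 2 (2*g) ⊆ S := fun j hj => by
        rw [mem_Icc] at hj; exact hall j hj.1 hj.2
      have := Finset.card_le_card hsub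
      rw [Nat.card_Icc] at this
      omega
    · -- all indices of E are 1, E = {in-triangle at 1} and c is private
      have hnone : ∀ j, 2 ≤ j → j ≤ 2 * g → j ∉ S := by
        intro j
        induction j with
        | zero => omega
        | succ k ih =>
          intro h2 hle hmem
          rcases Nat.lt_or_ge k 2 with hk | hk
          · have hk1 : k + 1 = 2 := by omega
            rw [hk1] at hmem; exact h2S hmem
          · have hkS : k ∈ S := by
              have := (hconst (k+1) (by omega) hle).mpr hmem
              simpa using this
            exact ih (by omega) (by omega) hkS
      obtain ⟨t₁, ht₁⟩ := hne
      obtain ⟨i, hi1, hi2, x, hx, hte, hx1⟩ := hET t₁ ht₁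
      have hiS : i ∈ S := by
        rw [hS, mem_filter, mem_Icc]
        exact ⟨⟨hi1, hi2⟩, t₁, ht₁, x, hx, hte⟩
      have hione : i = 1 := by
        by_contra h
        exact hnone i (by omega) hi2 hiS
      subst hione
      have hxc : x = c := hx1 rfl
      rw [hxc] at hte
      have hscc1 : scc g 1 = 2 := by simp only [scc]; split_ifs <;> omega
      have hE1 : E = {t₁} := by
        ext t
        simp only [mem_singleton]
        constructor
        · intro ht
          obtain ⟨i', hi1', hi2', y, hy, hte', -⟩ := hET t ht
          have hi'S : i' ∈ S := by
            rw [hS, mem_filter, mem_Icc]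
            exact ⟨⟨hi1', hi2'⟩, t, ht, y, hy, hte'⟩
          have hione' : i' = 1 := by
            by_contra h
            exact hnone i' (by omega) hi2' hi'S
          subst hione'
          exact hOne 1 le_rfl (by omega) t ht t₁ ht₁ ⟨y, hy, hte'⟩ ⟨c, Or.inr rfl, hte⟩
        · rintro rfl; exact ht₁
      refine ⟨c, ?_, ?_⟩
      · rw [Finset.mem_sdiff]
        constructor
        · refine Finset.mem_sup.mpr ⟨t₁, hEsub ht₁, ?_⟩
          simp only [id]
          rw [hte]; simp
        · simp only [mem_insert, mem_singleton, not_or]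
          exact ⟨fun h => hac h.symm,
            fun h => (hdist 1 (mem_Icc.mpr ⟨le_rfl, by omega⟩)).2 h.symm,
            fun h => (hdist 2 (mem_Icc.mpr ⟨by omega, by omega⟩)).2 h.symm⟩
      · rw [hE1, Finset.filter_singleton, if_pos]
        · simp
        · rw [hte]; simp
end

section
/- Fix an integer g > 2. Let T be a triple of vertices with an appended g-sphere, and let 𝓑^○(T) be the set of triangles of its in- and out-decompositions. Let 𝓔 ⊆ 𝓑^○(T) be a nonempty set of at most g pairwise edge-disjoint triangles. Then |V(𝓔) ∖ V(T)| ≥ |𝓔|. -/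
open Finset

def sphSucc (n i : ℕ) : ℕ := if i = n then 1 else i + 1

lemma sphSucc_mem {n i : ℕ} (hn : 1 ≤ n) (h : i ∈ Finset.Icc 1 n) :
    sphSucc n i ∈ Finset.Icc 1 n := by
  simp only [Finset.mem_Icc] at *
  unfold sphSucc; split <;> omega

lemma sphSucc_ne {n i : ℕ} (hn : 2 ≤ n) (h : i ∈ Finset.Icc 1 n) : sphSucc n i ≠ i := by
  simp only [Finset.mem_Icc] at h
  unfold sphSucc; split <;> omega

lemma sphSucc_inj {n i j : ℕ} (hi : i ∈ Finset.Icc 1 n) (hj : j ∈ Finset.Icc 1 n)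
    (h : sphSucc n i = sphSucc n j) : i = j := by
  simp only [Finset.mem_Icc] at hi hj
  unfold sphSucc at h; split at h <;> split at h <;> omega

lemma sphSucc_sphSucc_ne {n i : ℕ} (hn : 3 ≤ n) (hi : i ∈ Finset.Icc 1 n) :
    sphSucc n (sphSucc n i) ≠ i := by
  simp only [Finset.mem_Icc] at hi
  unfold sphSucc; split <;> split <;> omega

lemma sphSucc_iterate {n m : ℕ} (hn : 1 ≤ n) (hm : m ∈ Finset.Icc 1 n) (k : ℕ) :
    (sphSucc n)^[k] m = (m - 1 + k) % n + 1 := by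
  simp only [Finset.mem_Icc] at hm
  induction k with
  | zero =>
    simp only [Function.iterate_zero, id, Nat.add_zero]
    rw [Nat.mod_eq_of_lt (by omega)]; omega
  | succ k ih =>
    rw [Function.iterate_succ_apply', ih]
    have h1 : (m - 1 + k) % n < n := Nat.mod_lt _ (by omega)
    have h2 : (m - 1 + (k+1)) % n = ((m - 1 + k) % n + 1) % n := by
      rw [Nat.mod_add_mod, Nat.add_assoc]
    unfold sphSucc
    split_ifs with h
    · rw [h2, h, Nat.mod_self]
    · rw [h2, Nat.mod_eq_of_lt (show (m - 1 + k) % n + 1 < n by omega)]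

lemma cyc_closed {n : ℕ} (hn : 1 ≤ n) (I : Finset ℕ) (hI : I ⊆ Finset.Icc 1 n)
    (hne : I.Nonempty) (hcl : ∀ i ∈ I, sphSucc n i ∈ I) : I = Finset.Icc 1 n := by
  obtain ⟨i0, hi0⟩ := hne
  have hi0' := hI hi0
  have hiter : ∀ k, (sphSucc n)^[k] i0 ∈ I := by
    intro k
    induction k with
    | zero => simpa using hi0
    | succ k ih => rw [Function.iterate_succ_apply']; exact hcl _ ih
  apply Finset.Subset.antisymm hI
  intro j hj
  simp only [Finset.mem_Icc] at hj
  simp only [Finset.mem_Icc] at hi0'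
  have key := sphSucc_iterate (m := i0) hn (by simp only [Finset.mem_Icc]; omega) (n + j - i0)
  have heq : (i0 - 1 + (n + j - i0)) % n = j - 1 := by
    have : i0 - 1 + (n + j - i0) = n + (j - 1) := by omega
    rw [this, Nat.add_mod_left, Nat.mod_eq_of_lt (by omega)]
  rw [heq] at key
  have := hiter (n + j - i0)
  rw [key] at this
  rwa [show j - 1 + 1 = j by omega] at this

lemma mem_sphereB_iff {V : Type*} [DecidableEq V] {g : ℕ} {a c : V} {b : ℕ → V}
    {t : Finset V} :
    t ∈ sphereB g a c b ↔
      (∃ i ∈ Finset.Icc 1 (2*g), t = {c, b i, b (sphSucc (2*g) i)}) ∨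
      (∃ i ∈ Finset.Icc 2 (2*g), t = {a, b i, b (sphSucc (2*g) i)}) := by
  have hs : ∀ i : ℕ, (if i = 2*g then 1 else i + 1) = sphSucc (2*g) i := fun i => rfl
  constructor
  · intro h
    simp only [sphereB, Finset.mem_union, Finset.mem_image, Finset.mem_Icc] at h
    rcases h with ⟨i, hi, ht⟩ | ⟨i, hi, ht⟩
    · by_cases hp : i % 2 = 0
      · exact Or.inl ⟨i, by simp only [Finset.mem_Icc]; omega,
          by rw [← ht, hs]; simp [hp]⟩
      · exact Or.inr ⟨i, by simp only [Finset.mem_Icc]; omega,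
          by rw [← ht, hs]; simp [hp]⟩
    · by_cases hp : i % 2 = 1
      · exact Or.inl ⟨i, by simp only [Finset.mem_Icc]; omega,
          by rw [← ht, hs]; simp [hp]⟩
      · exact Or.inr ⟨i, by simp only [Finset.mem_Icc]; omega,
          by rw [← ht, hs]; simp [hp]⟩
  · intro h
    simp only [sphereB, Finset.mem_union, Finset.mem_image, Finset.mem_Icc]
    rcases h with ⟨i, hi, ht⟩ | ⟨i, hi, ht⟩
    · simp only [Finset.mem_Icc] at hi
      by_cases hp : i % 2 = 0
      · exact Or.inl ⟨i, by omega, by rw [ht, hs]; simp [hp]⟩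
      · exact Or.inr ⟨i, by omega, by rw [ht, hs]; simp [show i % 2 = 1 by omega]⟩
    · simp only [Finset.mem_Icc] at hi
      by_cases hp : i % 2 = 0
      · exact Or.inr ⟨i, by omega, by rw [ht, hs]; simp [show ¬ i % 2 = 1 by omega]⟩
      · exact Or.inl ⟨i, by omega, by rw [ht, hs]; simp [show ¬ i % 2 = 0 by omega]⟩

lemma tri_unique {V : Type*} [DecidableEq V] {n : ℕ} (hn : 3 ≤ n)
    {a c : V} {b : ℕ → V}
    (hbinj : ∀ i ∈ Finset.Icc 1 n, ∀ j ∈ Finset.Icc 1 n, b i = b j → i = j)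
    (hdist : ∀ i ∈ Finset.Icc 1 n, b i ≠ a ∧ b i ≠ c)
    {x y : V} (hx : x = a ∨ x = c) (hy : y = a ∨ y = c)
    {i j : ℕ} (hi : i ∈ Finset.Icc 1 n) (hj : j ∈ Finset.Icc 1 n)
    (h : ({x, b i, b (sphSucc n i)} : Finset V) = {y, b j, b (sphSucc n j)}) :
    i = j ∧ x = y := by
  have hbx : ∀ k ∈ Finset.Icc 1 n, ∀ z : V, (z = a ∨ z = c) → b k ≠ z := by
    intro k hk z hz
    rcases hz with rfl | rfl
    · exact (hdist k hk).1
    · exact (hdist k hk).2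
  have hσi := sphSucc_mem (by omega) hi
  have hσj := sphSucc_mem (by omega) hj
  have h1 : b i ∈ ({y, b j, b (sphSucc n j)} : Finset V) := by
    rw [← h]; simp
  have h2 : b (sphSucc n i) ∈ ({y, b j, b (sphSucc n j)} : Finset V) := by
    rw [← h]; simp
  simp only [Finset.mem_insert, Finset.mem_singleton] at h1 h2
  have hij : i = j := by
    rcases h1 with h1 | h1 | h1
    · exact absurd h1 (hbx i hi y hy)
    · exact hbinj i hi j hj h1
    · have hiσj : i = sphSucc n j := hbinj i hi _ hσj h1
      rcases h2 with h2 | h2 | h2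
      · exact absurd h2 (hbx _ hσi y hy)
      · have hσij : sphSucc n i = j := hbinj _ hσi j hj h2
        exfalso
        exact sphSucc_sphSucc_ne hn hj (by rw [← hiσj, hσij])
      · have hσσ : sphSucc n i = sphSucc n j := hbinj _ hσi _ hσj h2
        have hij' : i = j := sphSucc_inj hi hj hσσ
        exfalso
        exact sphSucc_ne (by omega) hj (by rw [← hiσj, hij'])
  refine ⟨hij, ?_⟩
  have hx' : x ∈ ({y, b j, b (sphSucc n j)} : Finset V) := by
    rw [← h]; simp
  simp only [Finset.mem_insert, Finset.mem_singleton] at hx'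
  rcases hx' with hx' | hx' | hx'
  · exact hx'
  · exact absurd hx'.symm (hbx j hj x hx)
  · exact absurd hx'.symm (hbx _ hσj x hx)



/-- In a `g`-sphere appended to the triple `T = {a, b 1, b 2}`, any nonempty set `𝓔` of
at most `g` pairwise edge-disjoint triangles from `𝓑^○(T)` satisfies
`|V(𝓔) ∖ V(T)| ≥ |𝓔|`. -/
theorem sphere_many_new_vertices {V : Type*} [DecidableEq V] (g : ℕ) (hg : 2 < g)
    (a c : V) (b : ℕ → V)
    (hbinj : ∀ i ∈ Finset.Icc 1 (2 * g), ∀ j ∈ Finset.Icc 1 (2 * g), b i = b j → i = j)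
    (hdist : ∀ i ∈ Finset.Icc 1 (2 * g), b i ≠ a ∧ b i ≠ c) (hac : a ≠ c)
    (E : Finset (Finset V)) (hEsub : E ⊆ sphereB g a c b) (hne : E.Nonempty)
    (hcard : E.card ≤ g)
    (hdisj : ∀ t₁ ∈ E, ∀ t₂ ∈ E, t₁ ≠ t₂ → (t₁ ∩ t₂).card ≤ 1) :
    E.card ≤ ((E.sup id) \ ({a, b 1, b 2} : Finset V)).card := by
  classical
  have h1mem : (1 : ℕ) ∈ Finset.Icc 1 (2*g) := by simp only [Finset.mem_Icc]; omega
  have h2mem : (2 : ℕ) ∈ Finset.Icc 1 (2*g) := by simp only [Finset.mem_Icc]; omega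
  -- choose an index for each triangle
  have hrep' : ∀ t, ∃ i, t ∈ E →
      ((i ∈ Finset.Icc 1 (2*g) ∧ t = {c, b i, b (sphSucc (2*g) i)}) ∨
       (i ∈ Finset.Icc 2 (2*g) ∧ t = {a, b i, b (sphSucc (2*g) i)})) := by
    intro t
    by_cases ht : t ∈ E
    · rcases mem_sphereB_iff.mp (hEsub ht) with ⟨i, hi, hti⟩ | ⟨i, hi, hti⟩
      · exact ⟨i, fun _ => Or.inl ⟨hi, hti⟩⟩
      · exact ⟨i, fun _ => Or.inr ⟨hi, hti⟩⟩
    · exact ⟨0, fun h => absurd h ht⟩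
  choose f hf using hrep'
  have hmemI : ∀ t ∈ E, f t ∈ Finset.Icc 1 (2*g) := by
    intro t ht
    rcases hf t ht with ⟨h1, _⟩ | ⟨h1, _⟩
    · exact h1
    · simp only [Finset.mem_Icc] at h1 ⊢; omega
  have hbt : ∀ t ∈ E, b (f t) ∈ t ∧ b (sphSucc (2*g) (f t)) ∈ t := by
    intro t ht
    obtain ⟨i, hi⟩ : ∃ i, i = f t := ⟨f t, rfl⟩
    rw [← hi]
    rcases hf t ht with ⟨_, h2⟩ | ⟨_, h2⟩ <;> rw [← hi] at h2 <;> rw [h2] <;>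
      simp
  have hbneσ : ∀ i ∈ Finset.Icc 1 (2*g), b i ≠ b (sphSucc (2*g) i) := by
    intro i hi hb
    exact sphSucc_ne (by omega) hi
      (hbinj _ (sphSucc_mem (by omega) hi) _ hi hb.symm)
  have hsup : ∀ t ∈ E, t ⊆ E.sup id := fun t ht => Finset.le_sup (f := id) ht
  -- f is injective on E
  have hinj : Set.InjOn f ↑E := by
    intro t1 ht1 t2 ht2 hff
    simp only [Finset.mem_coe] at ht1 ht2
    by_contra hne12
    have hkey : ({b (f t1), b (sphSucc (2*g) (f t1))} : Finset V) ⊆ t1 ∩ t2 := by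
      intro z hz
      rw [Finset.mem_inter]
      have hz2 : z ∈ ({b (f t2), b (sphSucc (2*g) (f t2))} : Finset V) := by
        rwa [← hff]
      simp only [Finset.mem_insert, Finset.mem_singleton] at hz hz2
      constructor
      · rcases hf t1 ht1 with ⟨_, h2⟩ | ⟨_, h2⟩ <;> rw [h2] <;>
          simp only [Finset.mem_insert, Finset.mem_singleton] <;> tauto
      · rcases hf t2 ht2 with ⟨_, h2⟩ | ⟨_, h2⟩ <;> rw [h2] <;>
          simp only [Finset.mem_insert, Finset.mem_singleton] <;> tauto
    have h2le : 2 ≤ (t1 ∩ t2).card := by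
      have hle := Finset.card_le_card hkey
      rwa [Finset.card_pair (hbneσ _ (hmemI t1 ht1))] at hle
    exact absurd (hdisj t1 ht1 t2 ht2 hne12) (by omega)
  set I : Finset ℕ := E.image f with hIdef
  have hcardI : I.card = E.card := Finset.card_image_of_injOn hinj
  have hIsub : I ⊆ Finset.Icc 1 (2*g) := by
    intro j hj
    obtain ⟨t, ht, rfl⟩ := Finset.mem_image.mp hj
    exact hmemI t ht
  set J : Finset ℕ := I ∪ I.image (sphSucc (2*g)) with hJdef
  have hJsub : J ⊆ Finset.Icc 1 (2*g) := by
    intro j hj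
    rcases Finset.mem_union.mp hj with h | h
    · exact hIsub h
    · obtain ⟨i, hi, rfl⟩ := Finset.mem_image.mp h
      exact sphSucc_mem (by omega) (hIsub hi)
  have hcov : ∀ j ∈ J, b j ∈ E.sup id := by
    intro j hj
    rcases Finset.mem_union.mp hj with h | h
    · obtain ⟨t, ht, rfl⟩ := Finset.mem_image.mp h
      exact hsup t ht (hbt t ht).1
    · obtain ⟨i, hi, rfl⟩ := Finset.mem_image.mp h
      obtain ⟨t, ht, rfl⟩ := Finset.mem_image.mp hi
      exact hsup t ht (hbt t ht).2
  set K : Finset ℕ := J \ {1, 2} with hKdef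
  have hKsubIcc : K ⊆ Finset.Icc 1 (2*g) := fun j hj => hJsub (Finset.mem_sdiff.mp hj).1
  have hKsub : K.image b ⊆ (E.sup id) \ ({a, b 1, b 2} : Finset V) := by
    intro z hz
    obtain ⟨j, hjK, rfl⟩ := Finset.mem_image.mp hz
    obtain ⟨hjJ, hj12⟩ := Finset.mem_sdiff.mp hjK
    simp only [Finset.mem_insert, Finset.mem_singleton] at hj12
    push_neg at hj12
    refine Finset.mem_sdiff.mpr ⟨hcov j hjJ, ?_⟩
    simp only [Finset.mem_insert, Finset.mem_singleton]
    push_neg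
    refine ⟨(hdist j (hJsub hjJ)).1, ?_, ?_⟩
    · intro h; exact hj12.1 (hbinj j (hJsub hjJ) 1 h1mem h)
    · intro h; exact hj12.2 (hbinj j (hJsub hjJ) 2 h2mem h)
  have hKcard : (K.image b).card = K.card := by
    apply Finset.card_image_of_injOn
    intro i hi j hj hb
    exact hbinj i (hKsubIcc hi) j (hKsubIcc hj) hb
  have hKeq : K.card + (J ∩ {1,2}).card = J.card := by
    rw [hKdef]; exact Finset.card_sdiff_add_card_inter J {1,2}
  have hKgoal : K.card ≤ ((E.sup id) \ ({a, b 1, b 2} : Finset V)).card := by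
    rw [← hKcard]; exact Finset.card_le_card hKsub
  have hJ12le : (J ∩ {1,2}).card ≤ 2 :=
    le_trans (Finset.card_le_card Finset.inter_subset_right) (by simp)
  by_cases hc : ∃ t ∈ E, c ∈ t
  · -- c is a new vertex
    have hcmem : c ∈ (E.sup id) \ ({a, b 1, b 2} : Finset V) := by
      obtain ⟨t, ht, hct⟩ := hc
      refine Finset.mem_sdiff.mpr ⟨hsup t ht hct, ?_⟩
      simp only [Finset.mem_insert, Finset.mem_singleton]
      push_neg
      exact ⟨fun h => hac h.symm, fun h => (hdist 1 h1mem).2 h.symm,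
        fun h => (hdist 2 h2mem).2 h.symm⟩
    have hcnotb : c ∉ K.image b := by
      rw [Finset.mem_image]
      rintro ⟨j, hjK, hbj⟩
      exact (hdist j (hKsubIcc hjK)).2 hbj
    have hins : insert c (K.image b) ⊆ (E.sup id) \ ({a, b 1, b 2} : Finset V) :=
      Finset.insert_subset hcmem hKsub
    have h1 : K.card + 1 ≤ ((E.sup id) \ ({a, b 1, b 2} : Finset V)).card := by
      have hle := Finset.card_le_card hins
      rwa [Finset.card_insert_of_notMem hcnotb, hKcard] at hle
    have hIJ : I ⊆ J := Finset.subset_union_left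
    have hInej : I ≠ J := by
      intro hEq
      have hcl : ∀ i ∈ I, sphSucc (2*g) i ∈ I := by
        intro i hi
        have h' : sphSucc (2*g) i ∈ J :=
          Finset.mem_union_right _ (Finset.mem_image_of_mem _ hi)
        rwa [← hEq] at h'
      have hIcc := cyc_closed (by omega : 1 ≤ 2*g) I hIsub (hne.image f) hcl
      have : I.card = 2*g := by rw [hIcc, Nat.card_Icc]; omega
      omega
    have hJI : I.card + 1 ≤ J.card := Finset.card_lt_card (hIJ.ssubset_of_ne hInej)
    omega
  · -- all triangles have apex a
    have hfa : ∀ t ∈ E, f t ∈ Finset.Icc 2 (2*g) ∧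
        t = {a, b (f t), b (sphSucc (2*g) (f t))} := by
      intro t ht
      rcases hf t ht with ⟨_, h2⟩ | h
      · exact absurd ⟨t, ht, by rw [h2]; simp⟩ hc
      · exact h
    have hnadj : ∀ t1 ∈ E, ∀ t2 ∈ E, sphSucc (2*g) (f t1) ≠ f t2 := by
      intro t1 ht1 t2 ht2 hadj
      by_cases h12 : t1 = t2
      · rw [h12] at hadj
        exact sphSucc_ne (by omega) (hmemI t2 ht2) hadj
      · have hsub2 : ({a, b (sphSucc (2*g) (f t1))} : Finset V) ⊆ t1 ∩ t2 := by
          intro z hz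
          rw [Finset.mem_inter, (hfa t1 ht1).2, (hfa t2 ht2).2]
          simp only [Finset.mem_insert, Finset.mem_singleton] at hz
          rcases hz with rfl | rfl
          · simp
          · constructor
            · simp
            · rw [hadj]; simp
        have hane : a ≠ b (sphSucc (2*g) (f t1)) :=
          Ne.symm (hdist _ (sphSucc_mem (by omega) (hmemI t1 ht1))).1
        have hle := Finset.card_le_card hsub2
        rw [Finset.card_pair hane] at hle
        exact absurd (hdisj t1 ht1 t2 ht2 h12) (by omega)
    have hdisjIσ : Disjoint I (I.image (sphSucc (2*g))) := by
      rw [Finset.disjoint_right]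
      intro j hj hjI
      obtain ⟨i, hi, rfl⟩ := Finset.mem_image.mp hj
      obtain ⟨t1, ht1, rfl⟩ := Finset.mem_image.mp hi
      obtain ⟨t2, ht2, hft2⟩ := Finset.mem_image.mp hjI
      exact hnadj t1 ht1 t2 ht2 hft2.symm
    have hJcard : J.card = 2 * I.card := by
      rw [hJdef, Finset.card_union_of_disjoint hdisjIσ,
        Finset.card_image_of_injOn (fun i hi j hj h =>
          sphSucc_inj (hIsub hi) (hIsub hj) h)]
      omega
    have h1nI : (1:ℕ) ∉ I := by
      intro h
      obtain ⟨t, ht, hft⟩ := Finset.mem_image.mp h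
      have h' := (hfa t ht).1
      rw [hft] at h'
      simp only [Finset.mem_Icc] at h'
      omega
    have hIpos : 1 ≤ I.card := Finset.card_pos.mpr (hne.image f)
    by_cases hboth : (1:ℕ) ∈ J ∧ (2:ℕ) ∈ J
    · obtain ⟨h1J, h2J⟩ := hboth
      have h2gI : 2*g ∈ I := by
        rcases Finset.mem_union.mp h1J with h | h
        · exact absurd h h1nI
        · obtain ⟨i, hi, hσ⟩ := Finset.mem_image.mp h
          have hi' := hIsub hi
          simp only [Finset.mem_Icc] at hi'
          have hieq : i = 2*g := by unfold sphSucc at hσ; split at hσ <;> omega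
          rwa [← hieq]
      have h2I : (2:ℕ) ∈ I := by
        rcases Finset.mem_union.mp h2J with h | h
        · exact h
        · obtain ⟨i, hi, hσ⟩ := Finset.mem_image.mp h
          have hi' := hIsub hi
          simp only [Finset.mem_Icc] at hi'
          have hieq : i = 1 := by unfold sphSucc at hσ; split at hσ <;> omega
          rw [hieq] at hi
          exact absurd hi h1nI
      have hI2 : 2 ≤ I.card := by
        have hsub3 : ({2, 2*g} : Finset ℕ) ⊆ I := by
          intro z hz
          simp only [Finset.mem_insert, Finset.mem_singleton] at hz
          rcases hz with rfl | rfl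
          · exact h2I
          · exact h2gI
        have := Finset.card_le_card hsub3
        rwa [Finset.card_pair (by omega)] at this
      omega
    · have hJ121 : (J ∩ {1,2}).card ≤ 1 := by
        rcases not_and_or.mp hboth with h | h
        · have hss : J ∩ {1,2} ⊆ {2} := by
            intro z hz
            rw [Finset.mem_inter] at hz
            simp only [Finset.mem_insert, Finset.mem_singleton] at hz ⊢
            rcases hz.2 with rfl | rfl
            · exact absurd hz.1 h
            · rfl
          exact le_trans (Finset.card_le_card hss) (by simp)
        · have hss : J ∩ {1,2} ⊆ {1} := by
            intro z hz
            rw [Finset.mem_inter] at hz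
            simp only [Finset.mem_insert, Finset.mem_singleton] at hz ⊢
            rcases hz.2 with rfl | rfl
            · rfl
            · exact absurd hz.1 h
          exact le_trans (Finset.card_le_card hss) (by simp)
      omega
end

section
/- Fix an integer g > 2, a vertex set Z, and a g-sphere-cover ○_g Z of Z. Let 𝒞 = ⋃_T 𝓑^○(T), the union over all 3-element subsets T of Z. If a graph L on the vertex set Z is triangle-decomposable, then L ∪ ○_g Z has a triangle-decomposition using only triangles of 𝒞, and this triangle-decomposition has girth greater than g. -/
open Finset

/-- `t` is a triangle of the graph `G`. -/
def IsTriangle {V : Type*} (G : SimpleGraph V) (t : Finset V) : Prop :=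
  t.card = 3 ∧ ∀ x ∈ t, ∀ y ∈ t, x ≠ y → G.Adj x y

/-- `S` is a triangle-decomposition of `G`: its members are triangles of `G`, and every
edge of `G` lies in exactly one of them. -/
def IsTriangleDecomp {V : Type*} (G : SimpleGraph V) (S : Finset (Finset V)) : Prop :=
  (∀ t ∈ S, IsTriangle G t) ∧ ∀ x y, G.Adj x y → ∃! t, t ∈ S ∧ x ∈ t ∧ y ∈ t

/-- The triple system `S` has girth greater than `g`. -/
def GirthGt {V : Type*} [DecidableEq V] (g : ℕ) (S : Finset (Finset V)) : Prop :=
  ∀ C ⊆ S, 2 ≤ C.card → C.card + 2 ≤ g → C.card + 3 ≤ (C.sup id).card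

/-- The adjacency relation of the `g`-sphere appended to a triple with vertices
`a, b 1, b 2`: edges `a-b j` for `3 ≤ j ≤ 2g`, `c-b j` for `1 ≤ j ≤ 2g`,
`b j - b (j+1)` for `2 ≤ j ≤ 2g-1`, and `b (2g) - b 1`. -/
def sphereAdjP {V : Type*} (g : ℕ) (a c : V) (b : ℕ → V) (x y : V) : Prop :=
  (∃ j, 3 ≤ j ∧ j ≤ 2 * g ∧ ((x = a ∧ y = b j) ∨ (y = a ∧ x = b j))) ∨
  (∃ j, 1 ≤ j ∧ j ≤ 2 * g ∧ ((x = c ∧ y = b j) ∨ (y = c ∧ x = b j))) ∨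
  (∃ j, 2 ≤ j ∧ j ≤ 2 * g - 1 ∧
    ((x = b j ∧ y = b (j + 1)) ∨ (y = b j ∧ x = b (j + 1)))) ∨
  ((x = b (2 * g) ∧ y = b 1) ∨ (y = b (2 * g) ∧ x = b 1))


/-!
Each triple `T` of `Z` contributes one triangle-decomposition of its sphere: the
in-decomposition, which also covers the edges of `T`, when `T` is a triangle of a fixed
decomposition `S₀` of `L`, and the out-decomposition otherwise. Distinct spheres share only
vertices of `Z`, and a sphere triangle with two vertices in `Z` lies in an in-decomposition, so
every edge of `L ∪ ○_g Z` is covered exactly once.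

For the girth, split a set `C` of at most `g - 2` of these triangles by spheres. Inside one
sphere, `k` triangles either use both apices and at least `k + 1` of the `2g` rim vertices, or
one apex and `2k` rim vertices; so they span at least `k + 2` vertices, at least `k + 3` if
`k ≥ 2`, and at least `k` vertices outside `Z`, which lie on no other sphere. Summing over the
spheres, `C` spans at least `#C + 3` vertices, unless every sphere contributes one triangle
through the same two vertices of `Z`, and two such triangles would share an edge.
-/

section Gluing

variable {V ι : Type*}

theorem isTriangle_iff_isNClique {G : SimpleGraph V} {t : Finset V} :
    IsTriangle G t ↔ G.IsNClique 3 t := by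
  rw [SimpleGraph.isNClique_iff, and_comm]
  rfl

theorem IsTriangleDecomp.eq_of_mem {G : SimpleGraph V} {S : Finset (Finset V)}
    (hS : IsTriangleDecomp G S) {t t' : Finset V} (ht : t ∈ S) (ht' : t' ∈ S) {x y : V}
    (hxy : x ≠ y) (hxt : x ∈ t) (hyt : y ∈ t) (hxt' : x ∈ t') (hyt' : y ∈ t') : t = t' :=
  (hS.2 x y ((hS.1 t ht).2 x hxt y hyt hxy)).unique ⟨ht, hxt, hyt⟩ ⟨ht', hxt', hyt'⟩

theorem mem_powersetCard_of_isTriangle {Z : Finset V} {L : SimpleGraph V}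
    (hLZ : ∀ x y, L.Adj x y → x ∈ Z ∧ y ∈ Z)
    {t : Finset V} (ht : IsTriangle L t) : t ∈ Z.powersetCard 3 := by
  refine mem_powersetCard.2 ⟨fun v hv => ?_, ht.1⟩
  obtain ⟨w, hw, hwv⟩ := exists_mem_ne (s := t) (by rw [ht.1]; omega) v
  exact (hLZ v w (ht.2 v hv w hw hwv.symm)).1

theorem IsTriangleDecomp.biUnion [DecidableEq V] {G : SimpleGraph V} {H : ι → SimpleGraph V}
    {P : Finset ι} {D : ι → Finset (Finset V)}
    (hG : ∀ x y, G.Adj x y ↔ ∃ i ∈ P, (H i).Adj x y)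
    (hD : ∀ i ∈ P, IsTriangleDecomp (H i) (D i))
    (hsep : ∀ i ∈ P, ∀ j ∈ P, ∀ t ∈ D i, ∀ t' ∈ D j, ∀ x y, x ≠ y →
      x ∈ t → y ∈ t → x ∈ t' → y ∈ t' → i = j) :
    IsTriangleDecomp G (P.biUnion D) := by
  refine ⟨fun t ht => ?_, fun x y hxy => ?_⟩
  · obtain ⟨i, hi, hti⟩ := mem_biUnion.1 ht
    obtain ⟨hcard, hadj⟩ := (hD i hi).1 t hti
    exact ⟨hcard, fun x hx y hy hne => (hG x y).2 ⟨i, hi, hadj x hx y hy hne⟩⟩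
  · obtain ⟨i, hi, hxy⟩ := (hG x y).1 hxy
    obtain ⟨t, ⟨hti, hxt, hyt⟩, -⟩ := (hD i hi).2 x y hxy
    refine ⟨t, ⟨mem_biUnion.2 ⟨i, hi, hti⟩, hxt, hyt⟩, ?_⟩
    rintro t' ⟨ht', hxt', hyt'⟩
    obtain ⟨j, hj, ht'j⟩ := mem_biUnion.1 ht'
    obtain rfl := hsep j hj i hi t' ht'j t hti x y hxy.ne hxt' hyt' hxt hyt
    exact (hD j hj).eq_of_mem ht'j hti hxy.ne hxt' hyt' hxt hyt

theorem add_three_le_of_blocks {Q : Finset ι} {k n : ι → ℕ} {z : ℕ} (hQ : 2 ≤ #Q)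
    (hkn : ∀ i ∈ Q, k i ≤ n i) (hblock : ∀ i ∈ Q, k i + 2 ≤ z + n i)
    (hslack : z ≠ 2 ∨ ∃ i ∈ Q, k i < n i) :
    ∑ i ∈ Q, k i + 3 ≤ z + ∑ i ∈ Q, n i := by
  have hsum := sum_le_sum hkn
  rcases Nat.lt_or_ge z 2 with hz | hz
  · have hdef : ∑ i ∈ Q, (k i + (2 - z)) ≤ ∑ i ∈ Q, n i :=
      sum_le_sum fun i hi => by have := hblock i hi; omega
    rw [sum_add_distrib, sum_const, smul_eq_mul] at hdef
    have : 2 * (2 - z) ≤ #Q * (2 - z) := Nat.mul_le_mul_right _ hQ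
    omega
  · rcases hslack with hz2 | ⟨i, hi, hlt⟩
    · omega
    · have := sum_lt_sum hkn ⟨i, hi, hlt⟩
      omega

section Girth

variable [DecidableEq V] {G : SimpleGraph V} {P : Finset ι} {D : ι → Finset (Finset V)}
  {Z : Finset V} {g : ℕ}

theorem IsTriangleDecomp.eq_of_two_le_card_inter {S : Finset (Finset V)}
    (hS : IsTriangleDecomp G S) {t t' : Finset V} (ht : t ∈ S) (ht' : t' ∈ S)
    (h2 : 2 ≤ #(t ∩ t')) : t = t' := by
  obtain ⟨x, hx, y, hy, hxy⟩ := one_lt_card.1 h2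
  exact hS.eq_of_mem ht ht' hxy (mem_inter.1 hx).1 (mem_inter.1 hy).1 (mem_inter.1 hx).2
    (mem_inter.1 hy).2

theorem index_eq_of_mem_of_mem (hg : 3 ≤ g)
    (hnew : ∀ i ∈ P, ∀ C ⊆ D i, #C + 2 ≤ g → #C ≤ #(C.sup id \ Z))
    (hdisj : (P : Set ι).PairwiseDisjoint fun i => (D i).sup id \ Z)
    {i j : ι} (hi : i ∈ P) (hj : j ∈ P) {t : Finset V} (hti : t ∈ D i) (htj : t ∈ D j) :
    i = j := by
  obtain ⟨v, hv⟩ : (t \ Z).Nonempty := by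
    have := hnew i hi ({t} : Finset (Finset V)) (singleton_subset_iff.2 hti)
      (by rw [card_singleton]; exact hg)
    rw [← card_pos]
    simpa using this
  have hsub : ∀ k, t ∈ D k → v ∈ (D k).sup id \ Z := fun k htk =>
    mem_sdiff.2 ⟨mem_sup.2 ⟨t, htk, (mem_sdiff.1 hv).1⟩, (mem_sdiff.1 hv).2⟩
  exact hdisj.elim_finset hi hj v (hsub i hti) (hsub j htj)

theorem GirthGt.add_two_le_card_sup {B : Finset (Finset V)} (hB : GirthGt g B)
    (h3 : ∀ t ∈ B, #t = 3) {C : Finset (Finset V)} (hCB : C ⊆ B) (hC : C.Nonempty)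
    (hCg : #C + 2 ≤ g) : #C + 2 ≤ #(C.sup id) := by
  rcases Nat.lt_or_ge #C 2 with h1 | h2
  · obtain ⟨t, rfl⟩ := (card_eq_one (s := C)).1 (by have := hC.card_pos; omega)
    simp [h3 t (hCB (mem_singleton_self t))]
  · have := hB C hCB h2 hCg
    omega

theorem GirthGt.card_inter_add_two_le {B : Finset (Finset V)} (hB : GirthGt g B)
    (h3 : ∀ t ∈ B, #t = 3) {C : Finset (Finset V)} (hC : (C ∩ B).Nonempty)
    (hCg : #C + 2 ≤ g) : #(C ∩ B) + 2 ≤ #(C.sup id ∩ Z) + #((C ∩ B).sup id \ Z) := by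
  have := hB.add_two_le_card_sup h3 inter_subset_right hC
    (le_trans (by have := card_le_card (inter_subset_left (s₁ := C) (s₂ := B)); omega) hCg)
  have := card_inter_add_card_sdiff ((C ∩ B).sup id) Z
  have : #((C ∩ B).sup id ∩ Z) ≤ #(C.sup id ∩ Z) :=
    card_le_card (inter_subset_inter (sup_mono inter_subset_left) le_rfl)
  omega

theorem GirthGt.exists_mem_inter_subset {B : Finset (Finset V)} (hB : GirthGt g B)
    (h3 : ∀ t ∈ B, #t = 3) {C : Finset (Finset V)} (hC : (C ∩ B).Nonempty)
    (hCg : #C + 2 ≤ g) (hn : #((C ∩ B).sup id \ Z) ≤ #(C ∩ B))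
    (hz : #(C.sup id ∩ Z) ≤ 2) :
    ∃ t ∈ C ∩ B, C.sup id ∩ Z ⊆ t := by
  have hCB := card_le_card (inter_subset_left (s₁ := C) (s₂ := B))
  have hblock := hB.card_inter_add_two_le (Z := Z) h3 hC hCg
  obtain ⟨t, htC⟩ := (card_eq_one (s := C ∩ B)).1 (by
    by_contra h1
    have := hC.card_pos
    have := hB (C ∩ B) inter_subset_right (by omega) (by omega)
    have := card_inter_add_card_sdiff ((C ∩ B).sup id) Z
    have : #((C ∩ B).sup id ∩ Z) ≤ #(C.sup id ∩ Z) :=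
      card_le_card (inter_subset_inter (sup_mono inter_subset_left) le_rfl)
    omega)
  have htW : t ∩ Z ⊆ C.sup id ∩ Z :=
    inter_subset_inter (le_sup (f := id) (mem_inter.1 (htC ▸ mem_singleton_self t)).1) le_rfl
  have htB := (mem_inter.1 (htC ▸ mem_singleton_self t)).2
  refine ⟨t, htC ▸ mem_singleton_self t, ?_⟩
  rw [htC, sup_singleton, id, card_singleton] at hn
  have := card_inter_add_card_sdiff t Z
  rw [← eq_of_subset_of_card_le htW (by rw [h3 t htB] at this; omega)]
  exact inter_subset_left

theorem biUnion_filter_inter_eq {C : Finset (Finset V)} (hC : C ⊆ P.biUnion D) :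
    ((P.filter fun i => (C ∩ D i).Nonempty).biUnion fun i => C ∩ D i) = C := by
  ext t
  refine ⟨fun ht => ?_, fun ht => ?_⟩
  · obtain ⟨i, -, hti⟩ := mem_biUnion.1 ht
    exact (mem_inter.1 hti).1
  · obtain ⟨i, hi, hti⟩ := mem_biUnion.1 (hC ht)
    have htCi : t ∈ C ∩ D i := mem_inter.2 ⟨ht, hti⟩
    exact mem_biUnion.2 ⟨i, mem_filter.2 ⟨hi, t, htCi⟩, htCi⟩

theorem card_sup_sdiff_eq_sum {C : Finset (Finset V)} {Q : Finset ι} (hQP : Q ⊆ P)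
    (hdisj : (P : Set ι).PairwiseDisjoint fun i => (D i).sup id \ Z)
    (hCQ : C = Q.biUnion fun i => C ∩ D i) :
    #(C.sup id \ Z) = ∑ i ∈ Q, #((C ∩ D i).sup id \ Z) := by
  have hsup := sup_biUnion (f := id) Q fun i => C ∩ D i
  rw [← hCQ] at hsup
  rw [hsup, ← Finset.sup_sdiff_right, sup_eq_biUnion]
  refine card_biUnion ((hdisj.subset (coe_subset.2 hQP)).mono_on fun i _ => ?_)
  exact sdiff_subset_sdiff (sup_mono inter_subset_right) le_rfl

section Blocks

variable (hS : IsTriangleDecomp G (P.biUnion D)) (hD : ∀ i ∈ P, GirthGt g (D i))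
  (hnew : ∀ i ∈ P, ∀ C ⊆ D i, #C + 2 ≤ g → #C ≤ #(C.sup id \ Z))
  (hdisj : (P : Set ι).PairwiseDisjoint fun i => (D i).sup id \ Z)
include hS hD hnew hdisj

theorem IsTriangleDecomp.add_three_le_card_sup_of_blocks {C : Finset (Finset V)}
    (hC : C ⊆ P.biUnion D) (hg : 3 ≤ g) (hCg : #C + 2 ≤ g)
    (hQ : 2 ≤ #(P.filter fun i => (C ∩ D i).Nonempty)) : #C + 3 ≤ #(C.sup id) := by
  set Q := P.filter fun i => (C ∩ D i).Nonempty
  have hQP : Q ⊆ P := filter_subset _ _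
  have hCQ : C = Q.biUnion fun i => C ∩ D i := (biUnion_filter_inter_eq hC).symm
  have hblocks : (Q : Set ι).PairwiseDisjoint fun i => C ∩ D i := fun i hi j hj hij =>
    disjoint_left.2 fun t hti htj => hij <| index_eq_of_mem_of_mem hg hnew hdisj
      (hQP hi) (hQP hj) (mem_inter.1 hti).2 (mem_inter.1 htj).2
  have hk := card_biUnion hblocks
  rw [← hCQ] at hk
  have hn := card_sup_sdiff_eq_sum hQP hdisj hCQ
  have hW := card_inter_add_card_sdiff (C.sup id) Z
  have h3 : ∀ i ∈ P, ∀ t ∈ D i, #t = 3 := fun i hi t ht =>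
    (hS.1 t (mem_biUnion.2 ⟨i, hi, ht⟩)).1
  by_cases htight :
      #(C.sup id ∩ Z) = 2 ∧ ∀ i ∈ Q, #((C ∩ D i).sup id \ Z) ≤ #(C ∩ D i)
  · -- every block is a single triangle through the two vertices of `C.sup id ∩ Z`
    have hsingle : ∀ i ∈ Q, ∃ t ∈ C ∩ D i, C.sup id ∩ Z ⊆ t := fun i hi =>
      (hD i (hQP hi)).exists_mem_inter_subset (h3 i (hQP hi)) (mem_filter.1 hi).2 hCg
        (htight.2 i hi) htight.1.le
    obtain ⟨i, hi, j, hj, hij⟩ := one_lt_card.1 (by omega : 1 < #Q)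
    obtain ⟨t, hti, htZ⟩ := hsingle i hi
    obtain ⟨t', htj, ht'Z⟩ := hsingle j hj
    have hmem : ∀ {s k}, s ∈ C ∩ D k → k ∈ Q → s ∈ P.biUnion D := fun hs hk =>
      mem_biUnion.2 ⟨_, hQP hk, (mem_inter.1 hs).2⟩
    obtain rfl := hS.eq_of_two_le_card_inter (hmem hti hi) (hmem htj hj)
      (htight.1 ▸ card_le_card (subset_inter htZ ht'Z))
    exact (disjoint_left.1 (hblocks hi hj hij) hti htj).elim
  · have := add_three_le_of_blocks hQ
      (fun i hi => hnew i (hQP hi) _ inter_subset_right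
        (le_trans (by have := card_le_card (inter_subset_left (s₁ := C) (s₂ := D i)); omega)
          hCg))
      (fun i hi => (hD i (hQP hi)).card_inter_add_two_le (h3 i (hQP hi)) (mem_filter.1 hi).2 hCg)
      (by rw [not_and_or] at htight; push Not at htight; exact htight)
    omega

theorem IsTriangleDecomp.girthGt_biUnion : GirthGt g (P.biUnion D) := by
  intro C hC hC2 hCg
  by_cases hQ : 2 ≤ #(P.filter fun i => (C ∩ D i).Nonempty)
  · exact hS.add_three_le_card_sup_of_blocks hD hnew hdisj hC (by omega) hCg hQ
  obtain ⟨i, hQi⟩ := (card_eq_one (s := P.filter fun i => (C ∩ D i).Nonempty)).1 (by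
    obtain ⟨t, ht⟩ := card_pos.1 (by omega : 0 < #C)
    obtain ⟨i, hi, -⟩ := mem_biUnion.1 ((biUnion_filter_inter_eq hC).symm ▸ ht)
    have := card_pos.2 ⟨i, hi⟩
    omega)
  have hCi := biUnion_filter_inter_eq hC
  rw [hQi, singleton_biUnion] at hCi
  have hi : i ∈ P := (mem_filter.1 (hQi ▸ mem_singleton_self i)).1
  rw [← hCi] at hC2 hCg ⊢
  exact hD i hi _ inter_subset_right hC2 hCg

end Blocks

end Girth

end Gluing

def cycSucc (g i : ℕ) : ℕ := if i = 2 * g then 1 else i + 1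

section CycSucc

variable {g i j u w : ℕ}

theorem cycSucc_mem_Icc (hi : i ∈ Icc 1 (2 * g)) : cycSucc g i ∈ Icc 1 (2 * g) := by
  simp only [mem_Icc, cycSucc] at *
  split_ifs <;> omega

theorem cycSucc_mod_two_ne : cycSucc g i % 2 ≠ i % 2 := by
  unfold cycSucc
  split_ifs <;> omega

theorem cycSucc_injOn : Set.InjOn (cycSucc g) (Icc 1 (2 * g)) := fun i hi j hj h => by
  simp only [coe_Icc, Set.mem_Icc, cycSucc] at *
  split_ifs at h <;> omega

theorem eq_of_two_mem_cycSucc (hg : 1 < g) (hi : i ∈ Icc 1 (2 * g)) (hj : j ∈ Icc 1 (2 * g))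
    (huw : u ≠ w) (hui : u = i ∨ u = cycSucc g i) (hwi : w = i ∨ w = cycSucc g i)
    (huj : u = j ∨ u = cycSucc g j) (hwj : w = j ∨ w = cycSucc g j) : i = j := by
  simp only [mem_Icc, cycSucc] at *
  split_ifs at * <;> omega

theorem eq_of_mem_cycSucc_of_mod_two_eq (hi : i ∈ Icc 1 (2 * g)) (hj : j ∈ Icc 1 (2 * g))
    (hij : i % 2 = j % 2) (hui : u = i ∨ u = cycSucc g i) (huj : u = j ∨ u = cycSucc g j) :
    i = j := by
  simp only [mem_Icc, cycSucc] at *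
  split_ifs at * <;> omega

theorem exists_cycSucc_eq_or_eq (hj : j ∈ Icc 1 (2 * g)) {q : ℕ} (hq : q ≤ 1) :
    ∃ i ∈ Icc 1 (2 * g), i % 2 = q ∧ (j = i ∨ j = cycSucc g i) ∧ (i = 1 → j ≤ 2) := by
  simp only [mem_Icc, cycSucc] at *
  by_cases hjq : j % 2 = q
  · exact ⟨j, hj, hjq, Or.inl rfl, by omega⟩
  · by_cases hj1 : j = 1
    · exact ⟨2 * g, by omega, by omega, Or.inr (by simp [hj1]), by omega⟩
    · exact ⟨j - 1, by omega, by omega, Or.inr (by split_ifs <;> omega), by omega⟩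

theorem Icc_subset_of_cycSucc_mem {I : Finset ℕ} (hI : I ⊆ Icc 1 (2 * g)) (hne : I.Nonempty)
    (hcl : ∀ i ∈ I, cycSucc g i ∈ I) : Icc 1 (2 * g) ⊆ I := by
  have hstep : ∀ m, ∀ i ∈ I, i + m ≤ 2 * g → i + m ∈ I := by
    intro m
    induction m with
    | zero => exact fun i hi _ => hi
    | succ m ih =>
      intro i hi hle
      have := hcl _ (ih i hi (by omega))
      have h1 := (mem_Icc.1 (hI hi)).1
      rwa [cycSucc, if_neg (by omega)] at this
  obtain ⟨i₀, hi₀⟩ := hne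
  have h₀ := mem_Icc.1 (hI hi₀)
  have htop := hstep (2 * g - i₀) i₀ hi₀ (by omega)
  rw [Nat.add_sub_cancel' h₀.2] at htop
  have hone := hcl _ htop
  rw [cycSucc, if_pos rfl] at hone
  intro j hj
  have := hstep (j - 1) 1 hone (by simp only [mem_Icc] at hj; omega)
  rwa [Nat.add_sub_cancel' (mem_Icc.1 hj).1] at this

theorem union_image_cycSucc_subset {I : Finset ℕ} (hI : I ⊆ Icc 1 (2 * g)) :
    I ∪ I.image (cycSucc g) ⊆ Icc 1 (2 * g) :=
  union_subset hI (image_subset_iff.2 fun _ hi => cycSucc_mem_Icc (hI hi))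

theorem card_add_one_le_card_union_image_cycSucc {I : Finset ℕ} (hI : I ⊆ Icc 1 (2 * g))
    (hne : I.Nonempty) (hlt : #I < 2 * g) : #I + 1 ≤ #(I ∪ I.image (cycSucc g)) := by
  refine card_lt_card (Finset.ssubset_iff_subset_ne.2 ⟨subset_union_left, fun heq => ?_⟩)
  have hcl : ∀ i ∈ I, cycSucc g i ∈ I := fun i hi =>
    heq ▸ mem_union_right _ (mem_image_of_mem _ hi)
  have := card_le_card (Icc_subset_of_cycSucc_mem hI hne hcl)
  simp only [Nat.card_Icc] at this
  omega

theorem card_union_image_cycSucc_of_mod_two_eq {I : Finset ℕ} (hI : I ⊆ Icc 1 (2 * g))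
    (hpar : ∀ i ∈ I, ∀ j ∈ I, i % 2 = j % 2) : #(I ∪ I.image (cycSucc g)) = 2 * #I := by
  have hdisj : Disjoint I (I.image (cycSucc g)) := disjoint_left.2 fun i hi hi' => by
    obtain ⟨j, hj, rfl⟩ := mem_image.1 hi'
    exact cycSucc_mod_two_ne (hpar _ hi j hj)
  rw [card_union_of_disjoint hdisj, card_image_of_injOn (cycSucc_injOn.mono (coe_subset.2 hI))]
  omega

end CycSucc

section Sphere

variable {V : Type*}

def sphereApex (p : ℕ) (a c : V) (i : ℕ) : V := if i % 2 = p then c else a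

def IsNewVertex (g : ℕ) (c : V) (b : ℕ → V) (v : V) : Prop :=
  v = c ∨ ∃ i, 3 ≤ i ∧ i ≤ 2 * g ∧ v = b i

structure IsSphereLabelling (g : ℕ) (a c : V) (b : ℕ → V) : Prop where
  injOn : Set.InjOn b (Icc 1 (2 * g))
  b_ne_a : ∀ i ∈ Icc 1 (2 * g), b i ≠ a
  b_ne_c : ∀ i ∈ Icc 1 (2 * g), b i ≠ c
  a_ne_c : a ≠ c

variable {g p i j : ℕ} {a c x y : V} {b : ℕ → V}

theorem sphereApex_eq_c (h : i % 2 = p) : sphereApex p a c i = c := if_pos h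

theorem sphereApex_eq_a (h : i % 2 ≠ p) : sphereApex p a c i = a := if_neg h

theorem mem_Icc_of_eq_or_eq_cycSucc {u : ℕ} (hi : i ∈ Icc 1 (2 * g))
    (hu : u = i ∨ u = cycSucc g i) : u ∈ Icc 1 (2 * g) := by
  rcases hu with rfl | rfl
  exacts [hi, cycSucc_mem_Icc hi]

namespace IsSphereLabelling

variable (h : IsSphereLabelling g a c b)
include h

theorem sphereApex_ne_b (hj : j ∈ Icc 1 (2 * g)) : sphereApex p a c i ≠ b j := by
  unfold sphereApex
  split_ifs
  exacts [(h.b_ne_c j hj).symm, (h.b_ne_a j hj).symm]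

theorem b_ne_b_cycSucc (hi : i ∈ Icc 1 (2 * g)) : b i ≠ b (cycSucc g i) := fun e =>
  cycSucc_mod_two_ne (congrArg (· % 2) (h.injOn hi (cycSucc_mem_Icc hi) e)).symm

theorem mod_two_eq_of_sphereApex_eq (hp : p ≤ 1)
    (e : sphereApex p a c i = sphereApex p a c j) : i % 2 = j % 2 := by
  unfold sphereApex at e
  split_ifs at e
  all_goals first | omega | exact absurd e h.a_ne_c | exact absurd e.symm h.a_ne_c

end IsSphereLabelling

variable [DecidableEq V]

def sphereTri (g p : ℕ) (a c : V) (b : ℕ → V) (i : ℕ) : Finset V :=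
  {sphereApex p a c i, b i, b (cycSucc g i)}

/-- The in-decomposition without its triple (`p = 1`) or the out-decomposition (`p = 0`)
of the `g`-sphere. -/
def sphereDecomp (g p : ℕ) (a c : V) (b : ℕ → V) : Finset (Finset V) :=
  (Icc (2 - p) (2 * g)).image (sphereTri g p a c b)

theorem sphereB_eq_union (g : ℕ) (a c : V) (b : ℕ → V) :
    sphereB g a c b = sphereDecomp g 0 a c b ∪ sphereDecomp g 1 a c b := rfl

/-- The graph decomposed by `sphereDecomp g p a c b`: the `g`-sphere, together with the
triple `a, b 1, b 2` when `p = 1`. -/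
def sphereGraph (g p : ℕ) (a c : V) (b : ℕ → V) : SimpleGraph V :=
  SimpleGraph.fromRel fun x y => sphereAdjP g a c b x y ∨
    p = 1 ∧ x ∈ ({a, b 1, b 2} : Finset V) ∧ y ∈ ({a, b 1, b 2} : Finset V)

theorem mem_sphereTri : x ∈ sphereTri g p a c b i ↔
    x = sphereApex p a c i ∨ ∃ u, (u = i ∨ u = cycSucc g i) ∧ x = b u := by
  simp [sphereTri]

theorem c_mem_sphereTri (h : i % 2 = p) : c ∈ sphereTri g p a c b i :=
  mem_sphereTri.2 (Or.inl (sphereApex_eq_c h).symm)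

theorem a_mem_sphereTri (h : i % 2 ≠ p) : a ∈ sphereTri g p a c b i :=
  mem_sphereTri.2 (Or.inl (sphereApex_eq_a h).symm)

theorem b_mem_sphereTri : b i ∈ sphereTri g p a c b i :=
  mem_sphereTri.2 (Or.inr ⟨i, Or.inl rfl, rfl⟩)

theorem b_cycSucc_mem_sphereTri : b (cycSucc g i) ∈ sphereTri g p a c b i :=
  mem_sphereTri.2 (Or.inr ⟨_, Or.inr rfl, rfl⟩)

theorem sup_sphereTri_eq (I : Finset ℕ) : I.sup (sphereTri g p a c b) =
    I.image (sphereApex p a c) ∪ (I ∪ I.image (cycSucc g)).image b := by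
  ext x
  simp only [mem_sup, mem_sphereTri, mem_union, mem_image]
  constructor
  · rintro ⟨i, hi, rfl | ⟨u, rfl | rfl, rfl⟩⟩
    · exact Or.inl ⟨i, hi, rfl⟩
    · exact Or.inr ⟨u, Or.inl hi, rfl⟩
    · exact Or.inr ⟨_, Or.inr ⟨i, hi, rfl⟩, rfl⟩
  · rintro (⟨i, hi, rfl⟩ | ⟨u, hu | ⟨i, hi, rfl⟩, rfl⟩)
    · exact ⟨i, hi, Or.inl rfl⟩
    · exact ⟨u, hu, Or.inr ⟨u, Or.inl rfl, rfl⟩⟩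
    · exact ⟨i, hi, Or.inr ⟨_, Or.inr rfl, rfl⟩⟩

theorem mem_triple_or_isNewVertex (hi : i ∈ Icc 1 (2 * g)) (hx : x ∈ sphereTri g p a c b i) :
    x ∈ ({a, b 1, b 2} : Finset V) ∨ IsNewVertex g c b x := by
  rcases mem_sphereTri.1 hx with rfl | ⟨u, hu, rfl⟩
  · unfold sphereApex
    split_ifs
    exacts [Or.inr (Or.inl rfl), Or.inl (mem_insert_self _ _)]
  · have hu' := mem_Icc.1 (mem_Icc_of_eq_or_eq_cycSucc hi hu)
    by_cases hu3 : 3 ≤ u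
    · exact Or.inr (Or.inr ⟨u, hu3, hu'.2, rfl⟩)
    · obtain rfl | rfl : u = 1 ∨ u = 2 := by omega
      all_goals simp

theorem exists_isNewVertex_mem_sphereTri (hg : 1 < g) (hp : p ≤ 1)
    (hi : i ∈ Icc (2 - p) (2 * g)) : ∃ v ∈ sphereTri g p a c b i, IsNewVertex g c b v := by
  simp only [mem_Icc] at hi
  rcases (by omega : i = 1 ∨ i = 2 ∨ 3 ≤ i) with rfl | rfl | hi3
  · exact ⟨c, c_mem_sphereTri (by omega), Or.inl rfl⟩
  · have h3 : cycSucc g 2 = 3 := if_neg (by omega)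
    exact ⟨_, h3 ▸ b_cycSucc_mem_sphereTri, Or.inr ⟨3, le_rfl, by omega, rfl⟩⟩
  · exact ⟨_, b_mem_sphereTri, Or.inr ⟨i, hi3, hi.2, rfl⟩⟩

theorem eq_one_of_mem_sphereTri {Z : Finset V} (hg : 1 < g) (hp : p ≤ 1)
    (hZ : ∀ v, IsNewVertex g c b v → v ∉ Z) (hi : i ∈ Icc (2 - p) (2 * g)) (hxy : x ≠ y)
    (hx : x ∈ sphereTri g p a c b i) (hy : y ∈ sphereTri g p a c b i) (hxZ : x ∈ Z)
    (hyZ : y ∈ Z) : p = 1 := by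
  have hi' : i ∈ Icc 1 (2 * g) := Icc_subset_Icc (by omega) le_rfl hi
  have hcls : ∀ v ∈ sphereTri g p a c b i, v ∈ Z →
      (v = a ∧ i % 2 ≠ p) ∨ ∃ u, (u = i ∨ u = cycSucc g i) ∧ u ≤ 2 ∧ v = b u := by
    intro v hv hvZ
    rcases mem_sphereTri.1 hv with rfl | ⟨u, hu, rfl⟩
    · by_cases hip : i % 2 = p
      · rw [sphereApex_eq_c hip] at hvZ
        exact absurd hvZ (hZ c (Or.inl rfl))
      · exact Or.inl ⟨sphereApex_eq_a hip, hip⟩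
    · refine Or.inr ⟨u, hu, ?_, rfl⟩
      by_contra hu2
      have hu' := mem_Icc.1 (mem_Icc_of_eq_or_eq_cycSucc hi' hu)
      exact hZ _ (Or.inr ⟨u, by omega, hu'.2, rfl⟩) hvZ
  -- only `c b 1 b 2`, `a b 2 b 3` and `a b (2g) b 1` meet `Z` twice, all in the in-decomposition
  simp only [mem_Icc] at hi
  rcases hcls x hx hxZ with ⟨rfl, hix⟩ | ⟨u, hu, hu2, rfl⟩ <;>
    rcases hcls y hy hyZ with ⟨rfl, hiy⟩ | ⟨w, hw, hw2, rfl⟩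
  · exact absurd rfl hxy
  · simp only [cycSucc] at hw; split_ifs at hw <;> omega
  · simp only [cycSucc] at hu; split_ifs at hu <;> omega
  · have huw : u ≠ w := fun e => hxy (congrArg b e)
    simp only [cycSucc] at hu hw; split_ifs at hu hw <;> omega

theorem exists_mem_sphereTri_of_mod_two (hp : p ≤ 1) {q : ℕ} (hq : q ≤ 1)
    (hj : j ∈ Icc 1 (2 * g)) (hj3 : p = 0 → q = 1 → 3 ≤ j) :
    ∃ i ∈ Icc (2 - p) (2 * g), i % 2 = q ∧ b j ∈ sphereTri g p a c b i := by
  obtain ⟨i, hi, hiq, hji, hi1⟩ := exists_cycSucc_eq_or_eq hj hq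
  refine ⟨i, ?_, hiq, mem_sphereTri.2 (Or.inr ⟨j, hji, rfl⟩)⟩
  simp only [mem_Icc] at hi hj ⊢
  omega

theorem exists_mem_sphereTri_of_sphereAdjP (hg : 1 < g) (hp : p ≤ 1)
    (hxy : sphereAdjP g a c b x y) :
    ∃ i ∈ Icc (2 - p) (2 * g), x ∈ sphereTri g p a c b i ∧ y ∈ sphereTri g p a c b i := by
  rcases hxy with ⟨j, hj3, hj, hxy⟩ | ⟨j, hj1, hj, hxy⟩ | ⟨j, hj2, hj, hxy⟩ | hxy
  · obtain ⟨i, hi, hiq, hbj⟩ := exists_mem_sphereTri_of_mod_two (q := 1 - p) (b := b) (a := a)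
      (c := c) hp (by omega) (mem_Icc.2 ⟨by omega, hj⟩) (fun _ _ => hj3)
    have ha : a ∈ sphereTri g p a c b i := a_mem_sphereTri (by omega)
    rcases hxy with ⟨rfl, rfl⟩ | ⟨rfl, rfl⟩
    exacts [⟨i, hi, ha, hbj⟩, ⟨i, hi, hbj, ha⟩]
  · obtain ⟨i, hi, hiq, hbj⟩ := exists_mem_sphereTri_of_mod_two (q := p) (b := b) (a := a)
      (c := c) hp hp (mem_Icc.2 ⟨hj1, hj⟩) (by omega)
    have hc : c ∈ sphereTri g p a c b i := c_mem_sphereTri hiq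
    rcases hxy with ⟨rfl, rfl⟩ | ⟨rfl, rfl⟩
    exacts [⟨i, hi, hc, hbj⟩, ⟨i, hi, hbj, hc⟩]
  · have hji : cycSucc g j = j + 1 := if_neg (by omega)
    have hi : j ∈ Icc (2 - p) (2 * g) := mem_Icc.2 ⟨by omega, by omega⟩
    rcases hxy with ⟨rfl, rfl⟩ | ⟨rfl, rfl⟩
    exacts [⟨j, hi, b_mem_sphereTri, hji ▸ b_cycSucc_mem_sphereTri⟩,
      ⟨j, hi, hji ▸ b_cycSucc_mem_sphereTri, b_mem_sphereTri⟩]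
  · have hi : 2 * g ∈ Icc (2 - p) (2 * g) := mem_Icc.2 ⟨by omega, le_rfl⟩
    have h1 : cycSucc g (2 * g) = 1 := if_pos rfl
    rcases hxy with ⟨rfl, rfl⟩ | ⟨rfl, rfl⟩
    exacts [⟨_, hi, b_mem_sphereTri, h1 ▸ b_cycSucc_mem_sphereTri⟩,
      ⟨_, hi, h1 ▸ b_cycSucc_mem_sphereTri, b_mem_sphereTri⟩]

theorem exists_mem_sphereTri_of_mem_triple (hg : 1 < g) (hx : x ∈ ({a, b 1, b 2} : Finset V))
    (hy : y ∈ ({a, b 1, b 2} : Finset V)) :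
    ∃ i ∈ Icc (2 - 1) (2 * g), x ∈ sphereTri g 1 a c b i ∧ y ∈ sphereTri g 1 a c b i := by
  have h1 : cycSucc g (2 * g) = 1 := if_pos rfl
  have h2 : cycSucc g 1 = 2 := if_neg (by omega)
  have t1 : b 1 ∈ sphereTri g 1 a c b 1 ∧ b 2 ∈ sphereTri g 1 a c b 1 :=
    ⟨b_mem_sphereTri, h2 ▸ b_cycSucc_mem_sphereTri⟩
  have t2 : a ∈ sphereTri g 1 a c b 2 ∧ b 2 ∈ sphereTri g 1 a c b 2 :=
    ⟨a_mem_sphereTri (by omega), b_mem_sphereTri⟩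
  have t2g : a ∈ sphereTri g 1 a c b (2 * g) ∧ b 1 ∈ sphereTri g 1 a c b (2 * g) :=
    ⟨a_mem_sphereTri (by omega), h1 ▸ b_cycSucc_mem_sphereTri⟩
  have m1 : 1 ∈ Icc (2 - 1) (2 * g) := mem_Icc.2 ⟨le_rfl, by omega⟩
  have m2 : 2 ∈ Icc (2 - 1) (2 * g) := mem_Icc.2 ⟨by omega, by omega⟩
  have m2g : 2 * g ∈ Icc (2 - 1) (2 * g) := mem_Icc.2 ⟨by omega, le_rfl⟩
  simp only [mem_insert, mem_singleton] at hx hy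
  rcases hx with rfl | rfl | rfl <;> rcases hy with rfl | rfl | rfl
  all_goals first
    | exact ⟨_, m1, t1.1, t1.2⟩ | exact ⟨_, m1, t1.2, t1.1⟩ | exact ⟨_, m1, t1.1, t1.1⟩
    | exact ⟨_, m1, t1.2, t1.2⟩ | exact ⟨_, m2, t2.1, t2.2⟩ | exact ⟨_, m2, t2.2, t2.1⟩
    | exact ⟨_, m2, t2.1, t2.1⟩ | exact ⟨_, m2g, t2g.1, t2g.2⟩
    | exact ⟨_, m2g, t2g.2, t2g.1⟩

theorem exists_mem_sphereTri_of_adj (hg : 1 < g) (hp : p ≤ 1)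
    (hxy : (sphereGraph g p a c b).Adj x y) :
    ∃ i ∈ Icc (2 - p) (2 * g), x ∈ sphereTri g p a c b i ∧ y ∈ sphereTri g p a c b i := by
  have hrel : ∀ {u v}, (sphereAdjP g a c b u v ∨
      p = 1 ∧ u ∈ ({a, b 1, b 2} : Finset V) ∧ v ∈ ({a, b 1, b 2} : Finset V)) →
      ∃ i ∈ Icc (2 - p) (2 * g),
        u ∈ sphereTri g p a c b i ∧ v ∈ sphereTri g p a c b i := by
    rintro u v (huv | ⟨rfl, hu, hv⟩)
    exacts [exists_mem_sphereTri_of_sphereAdjP hg hp huv,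
      exists_mem_sphereTri_of_mem_triple hg hu hv]
  rcases ((SimpleGraph.fromRel_adj _ _ _).1 hxy).2 with hr | hr
  · exact hrel hr
  · obtain ⟨i, hi, hy, hx⟩ := hrel hr
    exact ⟨i, hi, hx, hy⟩

namespace IsSphereLabelling

variable (h : IsSphereLabelling g a c b)
include h

theorem mem_sphereTri_inter (hi : i ∈ Icc 1 (2 * g)) (hj : j ∈ Icc 1 (2 * g))
    (hvi : x ∈ sphereTri g p a c b i) (hvj : x ∈ sphereTri g p a c b j) :
    (x = sphereApex p a c i ∧ x = sphereApex p a c j) ∨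
      ∃ u, (u = i ∨ u = cycSucc g i) ∧ (u = j ∨ u = cycSucc g j) ∧ x = b u := by
  rcases mem_sphereTri.1 hvi with hvi | ⟨u, hu, rfl⟩ <;>
    rcases mem_sphereTri.1 hvj with hvj | ⟨w, hw, hvj⟩
  · exact Or.inl ⟨hvi, hvj⟩
  · exact absurd (hvi.symm.trans hvj) (h.sphereApex_ne_b (mem_Icc_of_eq_or_eq_cycSucc hj hw))
  · exact absurd hvj.symm (h.sphereApex_ne_b (mem_Icc_of_eq_or_eq_cycSucc hi hu))
  · obtain rfl :=
      h.injOn (mem_Icc_of_eq_or_eq_cycSucc hi hu) (mem_Icc_of_eq_or_eq_cycSucc hj hw) hvj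
    exact Or.inr ⟨u, hu, hw, rfl⟩

theorem eq_of_mem_sphereTri (hg : 1 < g) (hp : p ≤ 1) (hi : i ∈ Icc 1 (2 * g))
    (hj : j ∈ Icc 1 (2 * g)) (hxy : x ≠ y) (hxi : x ∈ sphereTri g p a c b i)
    (hyi : y ∈ sphereTri g p a c b i) (hxj : x ∈ sphereTri g p a c b j)
    (hyj : y ∈ sphereTri g p a c b j) : i = j := by
  rcases h.mem_sphereTri_inter hi hj hxi hxj with ⟨hx1, hx2⟩ | ⟨u, hui, huj, rfl⟩ <;>
    rcases h.mem_sphereTri_inter hi hj hyi hyj with ⟨hy1, hy2⟩ | ⟨w, hwi, hwj, rfl⟩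
  · exact absurd (hx1.trans hy1.symm) hxy
  · exact eq_of_mem_cycSucc_of_mod_two_eq hi hj
      (h.mod_two_eq_of_sphereApex_eq hp (hx1.symm.trans hx2)) hwi hwj
  · exact eq_of_mem_cycSucc_of_mod_two_eq hi hj
      (h.mod_two_eq_of_sphereApex_eq hp (hy1.symm.trans hy2)) hui huj
  · exact eq_of_two_mem_cycSucc hg hi hj (fun e => hxy (congrArg b e)) hui hwi huj hwj

theorem sphereTri_injOn (hg : 1 < g) (hp : p ≤ 1) :
    Set.InjOn (sphereTri g p a c b) (Icc 1 (2 * g)) := fun i hi j hj e => by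
  have hx : b i ∈ sphereTri g p a c b i := b_mem_sphereTri
  have hy : b (cycSucc g i) ∈ sphereTri g p a c b i := b_cycSucc_mem_sphereTri
  exact h.eq_of_mem_sphereTri hg hp hi hj (h.b_ne_b_cycSucc hi) hx hy (e ▸ hx) (e ▸ hy)

theorem sphereGraph_adj_sphereApex (hp : p ≤ 1) (hi : i ∈ Icc (2 - p) (2 * g))
    (hj : j = i ∨ j = cycSucc g i) : (sphereGraph g p a c b).Adj (sphereApex p a c i) (b j) := by
  have hj' := mem_Icc_of_eq_or_eq_cycSucc (Icc_subset_Icc (by omega) le_rfl hi) hj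
  refine (SimpleGraph.fromRel_adj _ _ _).2 ⟨h.sphereApex_ne_b hj', Or.inl ?_⟩
  rw [mem_Icc] at hj'
  by_cases hip : i % 2 = p
  · rw [sphereApex_eq_c hip]
    exact Or.inl (Or.inr (Or.inl ⟨j, hj'.1, hj'.2, Or.inl ⟨rfl, rfl⟩⟩))
  · rw [sphereApex_eq_a hip]
    by_cases hj3 : 3 ≤ j
    · exact Or.inl (Or.inl ⟨j, hj3, hj'.2, Or.inl ⟨rfl, rfl⟩⟩)
    · have hp1 : p = 1 := by
        simp only [mem_Icc, cycSucc] at hi hj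
        split_ifs at hj <;> omega
      obtain rfl | rfl : j = 1 ∨ j = 2 := by omega
      all_goals exact Or.inr ⟨hp1, by simp, by simp⟩

theorem sphereGraph_adj_b_cycSucc (hp : p ≤ 1) (hi : i ∈ Icc (2 - p) (2 * g)) :
    (sphereGraph g p a c b).Adj (b i) (b (cycSucc g i)) := by
  have hi' : i ∈ Icc 1 (2 * g) := Icc_subset_Icc (by omega) le_rfl hi
  refine (SimpleGraph.fromRel_adj _ _ _).2 ⟨h.b_ne_b_cycSucc hi', Or.inl ?_⟩
  rw [mem_Icc] at hi
  by_cases h2g : i = 2 * g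
  · rw [cycSucc, if_pos h2g, h2g]
    exact Or.inl (Or.inr (Or.inr (Or.inr (Or.inl ⟨rfl, rfl⟩))))
  · rw [cycSucc, if_neg h2g]
    by_cases hi1 : i = 1
    · subst hi1
      exact Or.inr ⟨by omega, by simp, by simp⟩
    · exact Or.inl (Or.inr (Or.inr (Or.inl ⟨i, by omega, by omega, Or.inl ⟨rfl, rfl⟩⟩)))

theorem isTriangle_sphereTri (hp : p ≤ 1) (hi : i ∈ Icc (2 - p) (2 * g)) :
    IsTriangle (sphereGraph g p a c b) (sphereTri g p a c b i) := by
  rw [isTriangle_iff_isNClique, sphereTri, SimpleGraph.is3Clique_triple_iff]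
  exact ⟨h.sphereGraph_adj_sphereApex hp hi (Or.inl rfl),
    h.sphereGraph_adj_sphereApex hp hi (Or.inr rfl), h.sphereGraph_adj_b_cycSucc hp hi⟩

theorem isTriangleDecomp_sphereDecomp (hg : 1 < g) (hp : p ≤ 1) :
    IsTriangleDecomp (sphereGraph g p a c b) (sphereDecomp g p a c b) := by
  have hdom : Icc (2 - p) (2 * g) ⊆ Icc 1 (2 * g) := Icc_subset_Icc (by omega) le_rfl
  refine ⟨fun t ht => ?_, fun x y hxy => ?_⟩
  · obtain ⟨i, hi, rfl⟩ := mem_image.1 ht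
    exact h.isTriangle_sphereTri hp hi
  obtain ⟨i, hi, hx, hy⟩ := exists_mem_sphereTri_of_adj hg hp hxy
  refine ⟨_, ⟨mem_image_of_mem _ hi, hx, hy⟩, ?_⟩
  rintro t ⟨ht, hxt, hyt⟩
  obtain ⟨j, hj, rfl⟩ := mem_image.1 ht
  rw [h.eq_of_mem_sphereTri hg hp (hdom hj) (hdom hi) hxy.ne hxt hyt hx hy]

theorem card_sup_sphereTri {I : Finset ℕ} (hI : I ⊆ Icc 1 (2 * g)) :
    #(I.sup (sphereTri g p a c b)) =
      #(I.image (sphereApex p a c)) + #(I ∪ I.image (cycSucc g)) := by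
  have hJ := union_image_cycSucc_subset hI
  rw [sup_sphereTri_eq, card_union_of_disjoint,
    card_image_of_injOn (h.injOn.mono (coe_subset.2 hJ))]
  refine disjoint_left.2 fun v hv hv' => ?_
  obtain ⟨i, -, rfl⟩ := mem_image.1 hv
  obtain ⟨u, hu, he⟩ := mem_image.1 hv'
  exact h.sphereApex_ne_b (hJ hu) he.symm

theorem card_add_three_le_card_sup (hp : p ≤ 1) {I : Finset ℕ} (hI : I ⊆ Icc 1 (2 * g))
    (hI2 : 2 ≤ #I) (hIg : #I + 2 ≤ g) : #I + 3 ≤ #(I.sup (sphereTri g p a c b)) := by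
  rw [h.card_sup_sphereTri hI]
  have hne : I.Nonempty := card_pos.1 (by omega)
  have happ : 1 ≤ #(I.image (sphereApex p a c)) := card_pos.2 (hne.image _)
  by_cases hpar : ∀ i ∈ I, ∀ j ∈ I, i % 2 = j % 2
  · have := card_union_image_cycSucc_of_mod_two_eq hI hpar
    omega
  · push Not at hpar
    obtain ⟨i, hi, j, hj, hij⟩ := hpar
    have h2 : 1 < #(I.image (sphereApex p a c)) := one_lt_card.2
      ⟨_, mem_image_of_mem _ hi, _, mem_image_of_mem _ hj,
        fun e => hij (h.mod_two_eq_of_sphereApex_eq hp e)⟩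
    have := card_add_one_le_card_union_image_cycSucc hI hne (by omega)
    omega

theorem girthGt_sphereDecomp (hg : 1 < g) (hp : p ≤ 1) : GirthGt g (sphereDecomp g p a c b) := by
  intro C hC hC2 hCg
  obtain ⟨I, hI, rfl⟩ := subset_image_iff.1 hC
  have hI' : I ⊆ Icc 1 (2 * g) := hI.trans (Icc_subset_Icc (by omega) le_rfl)
  rw [card_image_of_injOn ((h.sphereTri_injOn hg hp).mono (coe_subset.2 hI'))] at hC2 hCg ⊢
  rw [sup_image, Function.id_comp]
  exact h.card_add_three_le_card_sup hp hI' hC2 hCg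

theorem card_union_image_cycSucc_le {Z : Finset V} (hZ : ∀ v, IsNewVertex g c b v → v ∉ Z)
    {I : Finset ℕ} (hI : I ⊆ Icc 1 (2 * g)) :
    #(I ∪ I.image (cycSucc g)) ≤ #((I.sup (sphereTri g p a c b) \ Z).erase c) + 2 := by
  have hJ := union_image_cycSucc_subset hI
  set J := I ∪ I.image (cycSucc g)
  have hK : (J \ {1, 2}).image b ⊆ (I.sup (sphereTri g p a c b) \ Z).erase c := by
    intro v hv
    obtain ⟨u, hu, rfl⟩ := mem_image.1 hv
    obtain ⟨huJ, hu12⟩ := mem_sdiff.1 hu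
    have hu' := hJ huJ
    simp only [mem_insert, mem_singleton] at hu12
    refine mem_erase.2
      ⟨h.b_ne_c u hu', mem_sdiff.2 ⟨?_, hZ _ (Or.inr ⟨u, ?_, ?_, rfl⟩)⟩⟩
    · rw [sup_sphereTri_eq]
      exact mem_union_right _ (mem_image_of_mem _ huJ)
    all_goals rw [mem_Icc] at hu'; omega
  have := card_le_card hK
  rw [card_image_of_injOn (h.injOn.mono (coe_subset.2 (sdiff_subset.trans hJ)))] at this
  have := card_le_card_sdiff_add_card (s := J) (t := {1, 2})
  have : #({1, 2} : Finset ℕ) = 2 := rfl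
  omega

theorem card_le_card_sup_sdiff (hg : 1 < g) (hp : p ≤ 1) {Z : Finset V}
    (hZ : ∀ v, IsNewVertex g c b v → v ∉ Z) {I : Finset ℕ} (hI : I ⊆ Icc (2 - p) (2 * g))
    (hIg : #I + 2 ≤ g) : #I ≤ #(I.sup (sphereTri g p a c b) \ Z) := by
  have hI' : I ⊆ Icc 1 (2 * g) := hI.trans (Icc_subset_Icc (by omega) le_rfl)
  have hJ := h.card_union_image_cycSucc_le hZ hI' (p := p)
  have herase := card_erase_le (s := I.sup (sphereTri g p a c b) \ Z) (a := c)
  rcases Nat.lt_or_ge #I 2 with hI1 | hI2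
  · rcases I.eq_empty_or_nonempty with rfl | hne
    · simp
    obtain ⟨i, rfl⟩ := (card_eq_one (s := I)).1 (by have := hne.card_pos; omega)
    obtain ⟨v, hv, hnew⟩ := exists_isNewVertex_mem_sphereTri (a := a) (b := b) hg hp
      (hI (mem_singleton_self i))
    rw [card_singleton, sup_singleton]
    exact card_pos.2 ⟨v, mem_sdiff.2 ⟨hv, hZ v hnew⟩⟩
  by_cases hc : ∃ i ∈ I, i % 2 = p
  · obtain ⟨i, hi, hip⟩ := hc
    have hcmem : c ∈ I.sup (sphereTri g p a c b) \ Z := mem_sdiff.2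
      ⟨mem_sup.2 ⟨i, hi, c_mem_sphereTri hip⟩, hZ c (Or.inl rfl)⟩
    have := card_erase_add_one hcmem
    have := card_add_one_le_card_union_image_cycSucc hI' (card_pos.1 (by omega)) (by omega)
    omega
  · push Not at hc
    have := card_union_image_cycSucc_of_mod_two_eq hI' fun i hi j hj => by
      have := hc i hi
      have := hc j hj
      omega
    omega

theorem card_le_card_sup_sdiff_of_subset (hg : 1 < g) (hp : p ≤ 1) {Z : Finset V}
    (hZ : ∀ v, IsNewVertex g c b v → v ∉ Z) {C : Finset (Finset V)}
    (hC : C ⊆ sphereDecomp g p a c b) (hCg : #C + 2 ≤ g) : #C ≤ #(C.sup id \ Z) := by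
  obtain ⟨I, hI, rfl⟩ := subset_image_iff.1 hC
  have hI' : I ⊆ Icc 1 (2 * g) := hI.trans (Icc_subset_Icc (by omega) le_rfl)
  rw [card_image_of_injOn ((h.sphereTri_injOn hg hp).mono (coe_subset.2 hI'))] at hCg ⊢
  rw [sup_image, Function.id_comp]
  exact h.card_le_card_sup_sdiff hg hp hZ hI hCg

end IsSphereLabelling

end Sphere

section SphereCover

variable {V : Type*} [DecidableEq V]

structure IsSphereCover (g : ℕ) (Z : Finset V) (aF cF : Finset V → V)
    (bF : Finset V → ℕ → V) : Prop where
  label : ∀ T ∈ Z.powersetCard 3, ({aF T, bF T 1, bF T 2} : Finset V) = T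
  labelling : ∀ T ∈ Z.powersetCard 3, IsSphereLabelling g (aF T) (cF T) (bF T)
  not_mem : ∀ T ∈ Z.powersetCard 3, ∀ v, IsNewVertex g (cF T) (bF T) v → v ∉ Z
  eq_of_isNewVertex : ∀ T ∈ Z.powersetCard 3, ∀ T' ∈ Z.powersetCard 3, ∀ v,
    IsNewVertex g (cF T) (bF T) v → IsNewVertex g (cF T') (bF T') v → T = T'

/-- The in-decomposition is used for the triples of `S₀`, the out-decomposition for the
others. -/
def sphereSide (S₀ : Finset (Finset V)) (T : Finset V) : ℕ := if T ∈ S₀ then 1 else 0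

def sphereCoverDecomp (g : ℕ) (Z : Finset V) (aF cF : Finset V → V)
    (bF : Finset V → ℕ → V) (S₀ : Finset (Finset V)) : Finset (Finset V) :=
  (Z.powersetCard 3).biUnion fun T => sphereDecomp g (sphereSide S₀ T) (aF T) (cF T) (bF T)

variable {g : ℕ} {Z : Finset V} {aF cF : Finset V → V} {bF : Finset V → ℕ → V}
  {S₀ : Finset (Finset V)} {T T' : Finset V} {x y : V}

theorem sphereSide_le_one : sphereSide S₀ T ≤ 1 := by
  unfold sphereSide
  split_ifs <;> omega

theorem sphereSide_eq_one : sphereSide S₀ T = 1 ↔ T ∈ S₀ := by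
  unfold sphereSide
  split_ifs <;> simp_all

theorem sup_adj_iff_exists_sphereGraph {L SC : SimpleGraph V}
    (hlabel : ∀ T ∈ Z.powersetCard 3, ({aF T, bF T 1, bF T 2} : Finset V) = T)
    (hSC : ∀ x y, SC.Adj x y ↔ x ≠ y ∧
      ∃ T ∈ Z.powersetCard 3, sphereAdjP g (aF T) (cF T) (bF T) x y)
    (hLZ : ∀ x y, L.Adj x y → x ∈ Z ∧ y ∈ Z) (hS₀ : IsTriangleDecomp L S₀) :
    (L ⊔ SC).Adj x y ↔
      ∃ T ∈ Z.powersetCard 3,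
        (sphereGraph g (sphereSide S₀ T) (aF T) (cF T) (bF T)).Adj x y := by
  constructor
  · rintro (hL | hS)
    · obtain ⟨t, ⟨ht, hxt, hyt⟩, -⟩ := hS₀.2 x y hL
      have htP := mem_powersetCard_of_isTriangle hLZ (hS₀.1 t ht)
      rw [← hlabel t htP] at hxt hyt
      exact ⟨t, htP, (SimpleGraph.fromRel_adj _ _ _).2
        ⟨hL.ne, Or.inl (Or.inr ⟨sphereSide_eq_one.2 ht, hxt, hyt⟩)⟩⟩
    · obtain ⟨hne, T, hT, hr⟩ := (hSC x y).1 hS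
      exact ⟨T, hT, (SimpleGraph.fromRel_adj _ _ _).2 ⟨hne, Or.inl (Or.inl hr)⟩⟩
  · rintro ⟨T, hT, hadj⟩
    have hrel : ∀ u v, u ≠ v → (sphereAdjP g (aF T) (cF T) (bF T) u v ∨
        sphereSide S₀ T = 1 ∧ u ∈ ({aF T, bF T 1, bF T 2} : Finset V) ∧
          v ∈ ({aF T, bF T 1, bF T 2} : Finset V)) →
        (L ⊔ SC).Adj u v := by
      rintro u v huv (hr | ⟨hside, hu, hv⟩)
      · exact Or.inr ((hSC u v).2 ⟨huv, T, hT, hr⟩)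
      · rw [hlabel T hT] at hu hv
        exact Or.inl ((hS₀.1 T (sphereSide_eq_one.1 hside)).2 u hu v hv huv)
    obtain ⟨hne, hr | hr⟩ := (SimpleGraph.fromRel_adj _ _ _).1 hadj
    exacts [hrel x y hne hr, (hrel y x hne.symm hr).symm]

namespace IsSphereCover

variable (hc : IsSphereCover g Z aF cF bF)
include hc

theorem mem_of_mem_sphereTri {p i : ℕ} (hT : T ∈ Z.powersetCard 3) (hi : i ∈ Icc 1 (2 * g))
    (hx : x ∈ sphereTri g p (aF T) (cF T) (bF T) i) (hxZ : x ∈ Z) : x ∈ T := by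
  rcases mem_triple_or_isNewVertex hi hx with hx | hx
  exacts [hc.label T hT ▸ hx, absurd hxZ (hc.not_mem T hT x hx)]

theorem isNewVertex_of_mem_sphereTri {p i : ℕ} (hT : T ∈ Z.powersetCard 3)
    (hi : i ∈ Icc 1 (2 * g)) (hx : x ∈ sphereTri g p (aF T) (cF T) (bF T) i) (hxZ : x ∉ Z) :
    IsNewVertex g (cF T) (bF T) x := by
  rcases mem_triple_or_isNewVertex hi hx with hx | hx
  exacts [absurd ((mem_powersetCard.1 hT).1 (hc.label T hT ▸ hx)) hxZ, hx]

theorem isNewVertex_of_mem_sup_sdiff (hT : T ∈ Z.powersetCard 3)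
    (hx : x ∈ (sphereDecomp g (sphereSide S₀ T) (aF T) (cF T) (bF T)).sup id \ Z) :
    IsNewVertex g (cF T) (bF T) x := by
  obtain ⟨hx, hxZ⟩ := mem_sdiff.1 hx
  obtain ⟨t, ht, hxt⟩ := mem_sup.1 hx
  obtain ⟨i, hi, rfl⟩ := mem_image.1 ht
  have := sphereSide_le_one (S₀ := S₀) (T := T)
  exact hc.isNewVertex_of_mem_sphereTri hT (Icc_subset_Icc (by omega) le_rfl hi) hxt hxZ

theorem pairwiseDisjoint_sup_sdiff : (Z.powersetCard 3 : Set (Finset V)).PairwiseDisjoint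
    fun T => (sphereDecomp g (sphereSide S₀ T) (aF T) (cF T) (bF T)).sup id \ Z :=
  fun T hT T' hT' hne => disjoint_left.2 fun v hv hv' => hne <| hc.eq_of_isNewVertex T hT T' hT' v
    (hc.isNewVertex_of_mem_sup_sdiff hT hv) (hc.isNewVertex_of_mem_sup_sdiff hT' hv')

theorem eq_of_mem_sphereDecomp (hg : 1 < g) {L : SimpleGraph V} (hS₀ : IsTriangleDecomp L S₀)
    (hT : T ∈ Z.powersetCard 3) (hT' : T' ∈ Z.powersetCard 3) {t t' : Finset V}
    (ht : t ∈ sphereDecomp g (sphereSide S₀ T) (aF T) (cF T) (bF T))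
    (ht' : t' ∈ sphereDecomp g (sphereSide S₀ T') (aF T') (cF T') (bF T')) (hxy : x ≠ y)
    (hxt : x ∈ t) (hyt : y ∈ t) (hxt' : x ∈ t') (hyt' : y ∈ t') : T = T' := by
  obtain ⟨i, hi, rfl⟩ := mem_image.1 ht
  obtain ⟨j, hj, rfl⟩ := mem_image.1 ht'
  have hside := sphereSide_le_one (S₀ := S₀) (T := T)
  have hside' := sphereSide_le_one (S₀ := S₀) (T := T')
  have hi' : i ∈ Icc 1 (2 * g) := Icc_subset_Icc (by omega) le_rfl hi
  have hj' : j ∈ Icc 1 (2 * g) := Icc_subset_Icc (by omega) le_rfl hj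
  by_cases hZ : x ∈ Z ∧ y ∈ Z
  · -- an edge inside `Z` is an edge of `L`, covered only once by `S₀`
    have hS := sphereSide_eq_one.1 <|
      eq_one_of_mem_sphereTri hg hside (hc.not_mem T hT) hi hxy hxt hyt hZ.1 hZ.2
    have hS' := sphereSide_eq_one.1 <|
      eq_one_of_mem_sphereTri hg hside' (hc.not_mem T' hT') hj hxy hxt' hyt' hZ.1 hZ.2
    exact hS₀.eq_of_mem hS hS' hxy (hc.mem_of_mem_sphereTri hT hi' hxt hZ.1)
      (hc.mem_of_mem_sphereTri hT hi' hyt hZ.2) (hc.mem_of_mem_sphereTri hT' hj' hxt' hZ.1)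
      (hc.mem_of_mem_sphereTri hT' hj' hyt' hZ.2)
  · obtain ⟨v, hvt, hvt', hvZ⟩ : ∃ v,
        v ∈ sphereTri g (sphereSide S₀ T) (aF T) (cF T) (bF T) i ∧
        v ∈ sphereTri g (sphereSide S₀ T') (aF T') (cF T') (bF T') j ∧ v ∉ Z := by
      by_cases hxZ : x ∈ Z
      exacts [⟨y, hyt, hyt', fun hyZ => hZ ⟨hxZ, hyZ⟩⟩, ⟨x, hxt, hxt', hxZ⟩]
    exact hc.eq_of_isNewVertex T hT T' hT' v (hc.isNewVertex_of_mem_sphereTri hT hi' hvt hvZ)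
      (hc.isNewVertex_of_mem_sphereTri hT' hj' hvt' hvZ)

theorem isTriangleDecomp (hg : 1 < g) {L SC : SimpleGraph V}
    (hSC : ∀ x y, SC.Adj x y ↔ x ≠ y ∧
      ∃ T ∈ Z.powersetCard 3, sphereAdjP g (aF T) (cF T) (bF T) x y)
    (hLZ : ∀ x y, L.Adj x y → x ∈ Z ∧ y ∈ Z) (hS₀ : IsTriangleDecomp L S₀) :
    IsTriangleDecomp (L ⊔ SC) (sphereCoverDecomp g Z aF cF bF S₀) :=
  IsTriangleDecomp.biUnion (fun _ _ => sup_adj_iff_exists_sphereGraph hc.label hSC hLZ hS₀)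
    (fun T hT => (hc.labelling T hT).isTriangleDecomp_sphereDecomp hg sphereSide_le_one)
    fun _ hT _ hT' _ ht _ ht' _ _ hxy hxt hyt hxt' hyt' =>
      hc.eq_of_mem_sphereDecomp hg hS₀ hT hT' ht ht' hxy hxt hyt hxt' hyt'

theorem girthGt (hg : 1 < g) {G : SimpleGraph V}
    (hdec : IsTriangleDecomp G (sphereCoverDecomp g Z aF cF bF S₀)) :
    GirthGt g (sphereCoverDecomp g Z aF cF bF S₀) :=
  hdec.girthGt_biUnion
    (fun T hT => (hc.labelling T hT).girthGt_sphereDecomp hg sphereSide_le_one)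
    (fun T hT _ hC hCg => (hc.labelling T hT).card_le_card_sup_sdiff_of_subset hg
      sphereSide_le_one (hc.not_mem T hT) hC hCg)
    hc.pairwiseDisjoint_sup_sdiff

end IsSphereCover

theorem exists_mem_sphereB_of_mem_sphereCoverDecomp {t : Finset V}
    (ht : t ∈ sphereCoverDecomp g Z aF cF bF S₀) :
    ∃ T ∈ Z.powersetCard 3, t ∈ sphereB g (aF T) (cF T) (bF T) := by
  obtain ⟨T, hT, htT⟩ := mem_biUnion.1 ht
  refine ⟨T, hT, ?_⟩
  rw [sphereB_eq_union]
  unfold sphereSide at htT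
  split_ifs at htT
  exacts [mem_union_right _ htT, mem_union_left _ htT]

end SphereCover

/-- The sphere-cover `○_g Z` is given by the labelling `aF T, bF T 1, bF T 2` of each triple
`T` and its new vertices `bF T 3, …, bF T (2g), cF T`; `SC` is the graph of all appended sphere
edges. -/
theorem sphere_cover_high_girth_absorption {V : Type*} [DecidableEq V] (g : ℕ)
    (hg : 2 < g) (Z : Finset V) (aF cF : Finset V → V) (bF : Finset V → ℕ → V)
    (hlabel : ∀ T ∈ Z.powersetCard 3, ({aF T, bF T 1, bF T 2} : Finset V) = T)
    (hinj : ∀ T ∈ Z.powersetCard 3,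
      (∀ i ∈ Finset.Icc 1 (2 * g), ∀ j ∈ Finset.Icc 1 (2 * g),
        bF T i = bF T j → i = j) ∧
      (∀ i ∈ Finset.Icc 1 (2 * g), bF T i ≠ aF T ∧ bF T i ≠ cF T) ∧ aF T ≠ cF T)
    (hnew : ∀ T ∈ Z.powersetCard 3,
      cF T ∉ Z ∧ ∀ i, 3 ≤ i → i ≤ 2 * g → bF T i ∉ Z)
    (hdisjoint : ∀ T ∈ Z.powersetCard 3, ∀ T' ∈ Z.powersetCard 3, T ≠ T' →
      ∀ v, (v = cF T ∨ ∃ i, 3 ≤ i ∧ i ≤ 2 * g ∧ v = bF T i) →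
        ¬(v = cF T' ∨ ∃ i, 3 ≤ i ∧ i ≤ 2 * g ∧ v = bF T' i))
    (SC : SimpleGraph V)
    (hSC : ∀ x y, SC.Adj x y ↔ x ≠ y ∧
      ∃ T ∈ Z.powersetCard 3, sphereAdjP g (aF T) (cF T) (bF T) x y)
    (L : SimpleGraph V) (hLZ : ∀ x y, L.Adj x y → x ∈ Z ∧ y ∈ Z)
    (hLdec : ∃ S₀ : Finset (Finset V), IsTriangleDecomp L S₀) :
    ∃ S : Finset (Finset V), IsTriangleDecomp (L ⊔ SC) S ∧
      (∀ t ∈ S, ∃ T ∈ Z.powersetCard 3, t ∈ sphereB g (aF T) (cF T) (bF T)) ∧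
      GirthGt g S := by
  obtain ⟨S₀, hS₀⟩ := hLdec
  have hc : IsSphereCover g Z aF cF bF :=
    { label := hlabel
      labelling := fun T hT =>
        { injOn := fun i hi j hj => (hinj T hT).1 i hi j hj
          b_ne_a := fun i hi => ((hinj T hT).2.1 i hi).1
          b_ne_c := fun i hi => ((hinj T hT).2.1 i hi).2
          a_ne_c := (hinj T hT).2.2 }
      not_mem := fun T hT v hv => by
        rcases hv with rfl | ⟨i, hi3, hi, rfl⟩
        exacts [(hnew T hT).1, (hnew T hT).2 i hi3 hi]
      eq_of_isNewVertex := fun T hT T' hT' v hv hv' =>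
        by_contra fun hne => hdisjoint T hT T' hT' hne v hv hv' }
  have hdec := hc.isTriangleDecomp (by omega) hSC hLZ hS₀
  exact ⟨_, hdec, fun _ => exists_mem_sphereB_of_mem_sphereCoverDecomp,
    hc.girthGt (by omega) hdec⟩
end

section
/- Let G = (V, E) be an n-vertex (p, ξ)-typical graph, for p, ξ ∈ (0, 1). Then for every pair of disjoint vertex sets S, T ⊆ V, the number e(S, T) of edges between S and T satisfies |e(S, T) − p|S||T|| ≤ 2(ξ^{1/2}·p·n + √(pn))·√(|S||T|). -/
open Finset
open scoped Classical

/-- An `n`-vertex graph is `(p, ξ)`-typical if every vertex has `(1 ± ξ) p n` neighbours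
and every pair of distinct vertices has `(1 ± ξ) p² n` common neighbours. -/
def Typical (V : Type*) [Fintype V] (G : SimpleGraph V) (p ξ : ℝ) : Prop :=
  (∀ v : V,
    (1 - ξ) * (p * Fintype.card V) ≤ ((G.neighborSet v).ncard : ℝ) ∧
    ((G.neighborSet v).ncard : ℝ) ≤ (1 + ξ) * (p * Fintype.card V)) ∧
  (∀ u v : V, u ≠ v →
    (1 - ξ) * (p ^ 2 * Fintype.card V) ≤
        ((G.neighborSet u ∩ G.neighborSet v).ncard : ℝ) ∧
    ((G.neighborSet u ∩ G.neighborSet v).ncard : ℝ) ≤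
        (1 + ξ) * (p ^ 2 * Fintype.card V))

/-- Discrepancy in typical graphs: for disjoint vertex sets `S, T` of a `(p, ξ)`-typical
graph, `|e(S,T) - p|S||T|| ≤ 2 (ξ^{1/2} p n + √(pn)) √(|S||T|)`. -/
theorem typical_discrepancy {V : Type*} [Fintype V] [DecidableEq V]
    (G : SimpleGraph V) (p ξ : ℝ) (hp0 : 0 < p) (hp1 : p < 1) (hξ0 : 0 < ξ)
    (hξ1 : ξ < 1) (hG : Typical V G p ξ) (S T : Finset V) (hST : Disjoint S T) :
    |(((S ×ˢ T).filter fun e => G.Adj e.1 e.2).card : ℝ) - p * S.card * T.card| ≤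
      2 * (Real.sqrt ξ * p * Fintype.card V + Real.sqrt (p * Fintype.card V)) *
        Real.sqrt (S.card * T.card) := by
  classical
  obtain ⟨hdeg, hcodeg⟩ := hG
  have hn0 : (0:ℝ) ≤ (Fintype.card V : ℝ) := Nat.cast_nonneg _
  have ht0 : (0:ℝ) ≤ (T.card : ℝ) := Nat.cast_nonneg _
  have hs0 : (0:ℝ) ≤ (S.card : ℝ) := Nat.cast_nonneg _
  have ht_le : (T.card : ℝ) ≤ (Fintype.card V : ℝ) := by
    exact_mod_cast Finset.card_le_univ T
  set f : V → ℝ := fun v => ∑ x ∈ T, if G.Adj v x then (1:ℝ) else 0 with hf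
  have he : (((S ×ˢ T).filter fun e => G.Adj e.1 e.2).card : ℝ) = ∑ a ∈ S, f a := by
    rw [Finset.card_filter]
    push_cast
    rw [Finset.sum_product]
  have hd : ∀ v : V, (∑ u : V, if G.Adj u v then (1:ℝ) else 0)
      = ((G.neighborSet v).ncard : ℝ) := by
    intro v
    rw [Finset.sum_boole]
    congr 1
    rw [Set.ncard_eq_toFinset_card']
    congr 1
    ext u
    simp [G.adj_comm]
  have hc : ∀ v w : V, (∑ u : V, if G.Adj u v ∧ G.Adj u w then (1:ℝ) else 0)
      = ((G.neighborSet v ∩ G.neighborSet w).ncard : ℝ) := by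
    intro v w
    rw [Finset.sum_boole]
    congr 1
    rw [Set.ncard_eq_toFinset_card']
    congr 1
    ext u
    simp only [Set.mem_toFinset, Set.mem_inter_iff, SimpleGraph.mem_neighborSet,
      Finset.mem_filter, Finset.mem_univ, true_and]
    constructor
    · rintro ⟨h1, h2⟩; exact ⟨h1.symm, h2.symm⟩
    · rintro ⟨h1, h2⟩; exact ⟨h1.symm, h2.symm⟩
  have hA : ∑ v : V, f v = ∑ x ∈ T, ((G.neighborSet x).ncard : ℝ) := by
    rw [Finset.sum_comm]
    exact Finset.sum_congr rfl fun x _ => hd x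
  have hB : ∑ v : V, (f v)^2
      = ∑ x ∈ T, ∑ y ∈ T, ((G.neighborSet x ∩ G.neighborSet y).ncard : ℝ) := by
    have h1 : ∀ v : V, (f v)^2
        = ∑ x ∈ T, ∑ y ∈ T, if G.Adj v x ∧ G.Adj v y then (1:ℝ) else 0 := by
      intro v
      rw [hf]
      simp only [sq, Finset.sum_mul_sum]
      refine Finset.sum_congr rfl fun x _ => Finset.sum_congr rfl fun y _ => ?_
      by_cases h1 : G.Adj v x <;> by_cases h2 : G.Adj v y <;> simp [h1, h2]
    rw [Finset.sum_congr rfl fun v _ => h1 v, Finset.sum_comm]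
    refine Finset.sum_congr rfl fun x _ => ?_
    rw [Finset.sum_comm]
    exact Finset.sum_congr rfl fun y _ => hc x y
  have hAlo : (T.card : ℝ) * ((1-ξ)*(p*(Fintype.card V : ℝ))) ≤ ∑ v : V, f v := by
    rw [hA]
    calc (T.card : ℝ) * ((1-ξ)*(p*(Fintype.card V : ℝ)))
        = ∑ _x ∈ T, (1-ξ)*(p*(Fintype.card V : ℝ)) := by
          rw [Finset.sum_const, nsmul_eq_mul]
      _ ≤ _ := Finset.sum_le_sum fun x _ => (hdeg x).1
  have hcod0 : (0:ℝ) ≤ (1+ξ)*(p^2*(Fintype.card V : ℝ)) := by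
    apply mul_nonneg (by linarith)
    exact mul_nonneg (sq_nonneg p) hn0
  have hBhi : ∑ v : V, (f v)^2 ≤ (T.card:ℝ)*((1+ξ)*(p*(Fintype.card V : ℝ)))
      + (T.card:ℝ)^2*((1+ξ)*(p^2*(Fintype.card V : ℝ))) := by
    rw [hB]
    have key : ∀ x ∈ T, ∑ y ∈ T, ((G.neighborSet x ∩ G.neighborSet y).ncard : ℝ)
        ≤ (1+ξ)*(p*(Fintype.card V : ℝ))
          + (T.card:ℝ)*((1+ξ)*(p^2*(Fintype.card V : ℝ))) := by
      intro x hx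
      rw [← Finset.add_sum_erase T _ hx]
      have hdiag : ((G.neighborSet x ∩ G.neighborSet x).ncard : ℝ)
          ≤ (1+ξ)*(p*(Fintype.card V : ℝ)) := by
        rw [Set.inter_self]
        exact (hdeg x).2
      have hoff : ∑ y ∈ T.erase x, ((G.neighborSet x ∩ G.neighborSet y).ncard : ℝ)
          ≤ (T.card:ℝ)*((1+ξ)*(p^2*(Fintype.card V : ℝ))) := by
        calc ∑ y ∈ T.erase x, ((G.neighborSet x ∩ G.neighborSet y).ncard : ℝ)
            ≤ ∑ _y ∈ T.erase x, (1+ξ)*(p^2*(Fintype.card V : ℝ)) :=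
              Finset.sum_le_sum fun y hy =>
                (hcodeg x y (Finset.ne_of_mem_erase hy).symm).2
          _ = ((T.erase x).card : ℝ) * ((1+ξ)*(p^2*(Fintype.card V : ℝ))) := by
              rw [Finset.sum_const, nsmul_eq_mul]
          _ ≤ (T.card:ℝ) * ((1+ξ)*(p^2*(Fintype.card V : ℝ))) := by
              apply mul_le_mul_of_nonneg_right _ hcod0
              exact_mod_cast Finset.card_le_card (Finset.erase_subset x T)
      linarith
    calc ∑ x ∈ T, ∑ y ∈ T, ((G.neighborSet x ∩ G.neighborSet y).ncard : ℝ)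
        ≤ ∑ _x ∈ T, ((1+ξ)*(p*(Fintype.card V : ℝ))
            + (T.card:ℝ)*((1+ξ)*(p^2*(Fintype.card V : ℝ)))) :=
          Finset.sum_le_sum key
      _ = _ := by rw [Finset.sum_const, nsmul_eq_mul]; ring
  -- expand the quadratic
  have hQ : ∑ v : V, (f v - p*(T.card:ℝ))^2
      = (∑ v : V, (f v)^2) - 2*(p*(T.card:ℝ))*(∑ v : V, f v)
        + (Fintype.card V : ℝ) * (p*(T.card:ℝ))^2 := by
    have expand : ∀ v : V, (f v - p*(T.card:ℝ))^2
        = (f v)^2 - 2*(p*(T.card:ℝ))*(f v) + (p*(T.card:ℝ))^2 := fun v => by ring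
    rw [Finset.sum_congr rfl fun v _ => expand v]
    rw [Finset.sum_add_distrib, Finset.sum_sub_distrib, ← Finset.mul_sum,
      Finset.sum_const, Finset.card_univ, nsmul_eq_mul]
  have hq0 : (0:ℝ) ≤ 2*(p*(T.card:ℝ)) := by positivity
  have step1 : 2*(p*(T.card:ℝ))*((T.card : ℝ) * ((1-ξ)*(p*(Fintype.card V : ℝ))))
      ≤ 2*(p*(T.card:ℝ))*(∑ v : V, f v) := mul_le_mul_of_nonneg_left hAlo hq0
  have hnneg1 : (0:ℝ) ≤ (1-ξ)*(p*(Fintype.card V : ℝ))*(T.card:ℝ) := by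
    apply mul_nonneg (mul_nonneg (by linarith) (by positivity)) ht0
  have hQhi : ∑ v : V, (f v - p*(T.card:ℝ))^2
      ≤ 3*ξ*p^2*(Fintype.card V : ℝ)*(T.card:ℝ)^2
        + 2*(p*(Fintype.card V : ℝ))*(T.card:ℝ) := by
    rw [hQ]
    nlinarith [hBhi, step1, hnneg1]
  have hS_le : ∑ a ∈ S, (f a - p*(T.card:ℝ))^2 ≤ ∑ v : V, (f v - p*(T.card:ℝ))^2 :=
    Finset.sum_le_sum_of_subset_of_nonneg (Finset.subset_univ S)
      (fun v _ _ => sq_nonneg _)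
  have hCS : (∑ a ∈ S, (f a - p*(T.card:ℝ)))^2
      ≤ (S.card : ℝ) * ∑ a ∈ S, (f a - p*(T.card:ℝ))^2 := by
    exact sq_sum_le_card_mul_sum_sq
  have hM : (∑ a ∈ S, (f a - p*(T.card:ℝ)))^2
      ≤ (S.card:ℝ) * (3*ξ*p^2*(Fintype.card V : ℝ)*(T.card:ℝ)^2
        + 2*(p*(Fintype.card V : ℝ))*(T.card:ℝ)) :=
    hCS.trans (mul_le_mul_of_nonneg_left (hS_le.trans hQhi) hs0)
  have hX : ∑ a ∈ S, (f a - p*(T.card:ℝ))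
      = (((S ×ˢ T).filter fun e => G.Adj e.1 e.2).card : ℝ)
        - p * S.card * T.card := by
    rw [Finset.sum_sub_distrib, Finset.sum_const, nsmul_eq_mul, he]; ring
  set R : ℝ := 2 * (Real.sqrt ξ * p * (Fintype.card V : ℝ)
      + Real.sqrt (p * (Fintype.card V : ℝ))) * Real.sqrt ((S.card:ℝ) * (T.card:ℝ))
    with hR
  have hR0 : 0 ≤ R := by rw [hR]; positivity
  have hfin : (S.card:ℝ) * (3*ξ*p^2*(Fintype.card V : ℝ)*(T.card:ℝ)^2
      + 2*(p*(Fintype.card V : ℝ))*(T.card:ℝ)) ≤ R^2 := by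
    have hsq1 : Real.sqrt ξ ^ 2 = ξ := Real.sq_sqrt hξ0.le
    have hsq2 : Real.sqrt (p*(Fintype.card V : ℝ))^2 = p*(Fintype.card V : ℝ) :=
      Real.sq_sqrt (by positivity)
    have hsq3 : Real.sqrt ((S.card:ℝ)*(T.card:ℝ))^2 = (S.card:ℝ)*(T.card:ℝ) :=
      Real.sq_sqrt (by positivity)
    have h2ab : (0:ℝ) ≤ 2*(Real.sqrt ξ * p * (Fintype.card V : ℝ))
        * Real.sqrt (p*(Fintype.card V : ℝ)) := by positivity
    have hab : ξ*p^2*(Fintype.card V : ℝ)^2 + p*(Fintype.card V : ℝ)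
        ≤ (Real.sqrt ξ * p * (Fintype.card V : ℝ)
          + Real.sqrt (p*(Fintype.card V : ℝ)))^2 := by
      have hexp : (Real.sqrt ξ * p * (Fintype.card V : ℝ)
          + Real.sqrt (p*(Fintype.card V : ℝ)))^2
          = Real.sqrt ξ ^ 2 * p^2 * (Fintype.card V : ℝ)^2
            + 2*(Real.sqrt ξ * p * (Fintype.card V : ℝ))
              * Real.sqrt (p*(Fintype.card V : ℝ))
            + Real.sqrt (p*(Fintype.card V : ℝ))^2 := by ring
      rw [hexp, hsq1, hsq2]
      linarith
    have hRsq : R^2 = 4 * ((Real.sqrt ξ * p * (Fintype.card V : ℝ)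
        + Real.sqrt (p*(Fintype.card V : ℝ)))^2) * ((S.card:ℝ)*(T.card:ℝ)) := by
      rw [hR]; rw [mul_pow, mul_pow, hsq3]; ring
    have hbase : (0:ℝ) ≤ ξ*p^2*(Fintype.card V : ℝ)*(T.card:ℝ)*(S.card:ℝ) := by
      apply mul_nonneg (mul_nonneg (mul_nonneg (mul_nonneg hξ0.le (sq_nonneg p)) hn0) ht0) hs0
    have h1 : (0:ℝ) ≤ ξ*p^2*(Fintype.card V : ℝ)*(T.card:ℝ)*(S.card:ℝ)
        * ((Fintype.card V : ℝ) - (T.card:ℝ)) :=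
      mul_nonneg hbase (by linarith)
    have h2 : (0:ℝ) ≤ ξ*p^2*(Fintype.card V : ℝ)*(T.card:ℝ)*(S.card:ℝ)
        * (Fintype.card V : ℝ) := mul_nonneg hbase hn0
    have h3 : (0:ℝ) ≤ p*(Fintype.card V : ℝ)*(S.card:ℝ)*(T.card:ℝ) := by positivity
    rw [hRsq]
    have step : (S.card:ℝ) * (3*ξ*p^2*(Fintype.card V : ℝ)*(T.card:ℝ)^2
        + 2*(p*(Fintype.card V : ℝ))*(T.card:ℝ))
        ≤ 4 * (ξ*p^2*(Fintype.card V : ℝ)^2 + p*(Fintype.card V : ℝ))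
          * ((S.card:ℝ)*(T.card:ℝ)) := by linarith [h1, h2, h3]
    refine step.trans ?_
    exact mul_le_mul_of_nonneg_right
      (mul_le_mul_of_nonneg_left hab (by norm_num)) (mul_nonneg hs0 ht0)
  rw [← hX, ← Real.sqrt_sq_eq_abs]
  calc Real.sqrt ((∑ a ∈ S, (f a - p*(T.card:ℝ)))^2)
      ≤ Real.sqrt (R^2) := Real.sqrt_le_sqrt (hM.trans hfin)
    _ = R := Real.sqrt_sq hR0
end

section
/- Let G = (X ∪ Y, E) be a bipartite graph with parts X and Y satisfying |X| = |Y| = n. Suppose that for every S ⊆ X and S′ ⊆ Y with |S′| < |S| ≤ ⌈n/2⌉ we have e(S, Y ∖ S′) ≠ 0, and that for every T′ ⊆ X and T ⊆ Y with |T′| < |T| ≤ ⌈n/2⌉ we have e(T, X ∖ T′) ≠ 0. Then G has a perfect matching. -/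
/-!
The hypotheses say exactly that Hall's condition `|S| ≤ |N(S)|` holds for all sets of at most
`⌈n/2⌉` vertices on either side. It then holds for every `S ⊆ X`: if a larger `S` violated it,
`T = Y \ N(S)` would satisfy `N(T) ⊆ X \ S`, so `|N(T)| ≤ n - |S| < n - |N(S)| = |T|`, while
`|T| ≤ ⌈n/2⌉` because a subset of `S` of size `⌈n/2⌉` already has `⌈n/2⌉` neighbours.
By symmetry Hall's condition holds on both sides, hence for all vertex sets, and Hall's marriage
theorem gives a perfect matching.
-/

open Finset
open scoped Classical

namespace SimpleGraph

variable {V : Type*} [Fintype V] [DecidableEq V] {G : SimpleGraph V} {X Y : Finset V}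

abbrev HallUpTo (G : SimpleGraph V) (X : Finset V) (m : ℕ) : Prop :=
  ∀ S ⊆ X, S.card ≤ m → S.card ≤ (S.biUnion fun v => G.neighborFinset v).card

theorem IsBipartiteWith.biUnion_neighborFinset_subset (hG : G.IsBipartiteWith X Y)
    {S : Finset V} (hS : S ⊆ X) : (S.biUnion fun v => G.neighborFinset v) ⊆ Y := by
  intro y hy
  obtain ⟨x, hx, hxy⟩ := mem_biUnion.mp hy
  exact hG.mem_of_mem_adj (hS hx) ((G.mem_neighborFinset x y).mp hxy)

theorem filter_adj_product_sdiff_biUnion_neighborFinset (S B : Finset V) :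
    (S ×ˢ (B \ S.biUnion fun v => G.neighborFinset v)).filter (fun e => G.Adj e.1 e.2) = ∅ := by
  refine filter_eq_empty_iff.mpr fun ⟨x, y⟩ hxy hadj => ?_
  obtain ⟨hx, -, hy⟩ := by simpa only [mem_product, mem_sdiff] using hxy
  exact hy (mem_biUnion.mpr ⟨x, hx, (G.mem_neighborFinset x y).mpr hadj⟩)

theorem hallUpTo_of_forall_exists_edge (hG : G.IsBipartiteWith X Y) {m : ℕ}
    (h : ∀ S ⊆ X, ∀ S' ⊆ Y, S'.card < S.card → S.card ≤ m →
      ((S ×ˢ (Y \ S')).filter fun e => G.Adj e.1 e.2).card ≠ 0) :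
    G.HallUpTo X m := by
  intro S hS hm
  by_contra hlt
  exact h S hS _ (hG.biUnion_neighborFinset_subset hS) (not_le.mp hlt) hm
    (card_eq_zero.mpr (filter_adj_product_sdiff_biUnion_neighborFinset S Y))

theorem HallUpTo.le_card_biUnion_neighborFinset {m : ℕ} (h : G.HallUpTo X m) {S : Finset V}
    (hS : S ⊆ X) (hm : m ≤ S.card) : m ≤ (S.biUnion fun v => G.neighborFinset v).card := by
  obtain ⟨S₀, hS₀, rfl⟩ := exists_subset_card_eq hm
  exact (h S₀ (hS₀.trans hS) le_rfl).trans
    (card_le_card (biUnion_subset_biUnion_of_subset_left _ hS₀))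

theorem IsBipartiteWith.biUnion_neighborFinset_sdiff_subset (hG : G.IsBipartiteWith X Y)
    (S : Finset V) :
    ((Y \ S.biUnion fun v => G.neighborFinset v).biUnion fun v => G.neighborFinset v) ⊆
      X \ S := by
  intro x hx
  obtain ⟨y, hy, hyx⟩ := mem_biUnion.mp hx
  obtain ⟨hyY, hyN⟩ := mem_sdiff.mp hy
  have hadj := (G.mem_neighborFinset y x).mp hyx
  refine mem_sdiff.mpr ⟨hG.mem_of_mem_adj' hyY hadj.symm, fun hxS => hyN ?_⟩
  exact mem_biUnion.mpr ⟨x, hxS, (G.mem_neighborFinset x y).mpr hadj.symm⟩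

theorem HallUpTo.card_le_card_biUnion_neighborFinset (hG : G.IsBipartiteWith X Y) {n m : ℕ}
    (hX : X.card = n) (hY : Y.card = n) (hnm : n ≤ 2 * m)
    (hXm : G.HallUpTo X m) (hYm : G.HallUpTo Y m) {S : Finset V} (hS : S ⊆ X) :
    S.card ≤ (S.biUnion fun v => G.neighborFinset v).card := by
  rcases le_or_gt S.card m with hSm | hSm
  · exact hXm S hS hSm
  by_contra hlt
  set N := S.biUnion fun v => G.neighborFinset v
  have hNY : N ⊆ Y := hG.biUnion_neighborFinset_subset hS
  have hN : m ≤ N.card := hXm.le_card_biUnion_neighborFinset hS hSm.le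
  have hT : (Y \ N).card = n - N.card := by rw [card_sdiff_of_subset hNY, hY]
  have hNT : ((Y \ N).biUnion fun v => G.neighborFinset v).card ≤ n - S.card := by
    simpa only [card_sdiff_of_subset hS, hX] using
      card_le_card (hG.biUnion_neighborFinset_sdiff_subset S)
  have hSn : S.card ≤ n := hX ▸ card_le_card hS
  have := hYm (Y \ N) sdiff_subset (by omega)
  omega

theorem IsBipartiteWith.card_le_card_biUnion_neighborFinset (hG : G.IsBipartiteWith X Y)
    (hcover : X ∪ Y = univ)
    (hX : ∀ S ⊆ X, S.card ≤ (S.biUnion fun v => G.neighborFinset v).card)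
    (hY : ∀ S ⊆ Y, S.card ≤ (S.biUnion fun v => G.neighborFinset v).card) (S : Finset V) :
    S.card ≤ (S.biUnion fun v => G.neighborFinset v).card := by
  have hsplit : S = S ∩ X ∪ S ∩ Y := by rw [← inter_union_distrib_left, hcover, inter_univ]
  have hdisj : Disjoint X Y := disjoint_coe.mp hG.disjoint
  rw [hsplit, union_biUnion, card_union_of_disjoint (disjoint_of_subset_left inter_subset_right
    (disjoint_of_subset_right inter_subset_right hdisj)), card_union_of_disjoint
    (disjoint_of_subset_left (hG.biUnion_neighborFinset_subset inter_subset_right)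
      (disjoint_of_subset_right (hG.symm.biUnion_neighborFinset_subset inter_subset_right)
        hdisj.symm))]
  exact add_le_add (hX _ inter_subset_right) (hY _ inter_subset_right)

theorem ncard_le_ncard_iUnion_neighborSet_of_forall_card_le
    (h : ∀ S : Finset V, S.card ≤ (S.biUnion fun v => G.neighborFinset v).card) (s : Set V) :
    s.ncard ≤ (⋃ x ∈ s, G.neighborSet x).ncard := by
  have hN : ⋃ x ∈ s, G.neighborSet x = ↑(s.toFinset.biUnion fun v => G.neighborFinset v) := by
    ext; simp
  rw [hN, Set.ncard_coe_finset, Set.ncard_eq_toFinset_card']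
  exact h _

end SimpleGraph

open SimpleGraph in
/-- Hall-type criterion for perfect matchings in bipartite graphs:
if between any `S ⊆ X` and the complement of any smaller `S' ⊆ Y` there is an edge
(for `|S| ≤ ⌈n/2⌉`), and symmetrically, then the graph has a perfect matching. -/
theorem hall_type_matching {V : Type*} [Fintype V] [DecidableEq V]
    (G : SimpleGraph V) (X Y : Finset V) (n : ℕ)
    (hdisj : Disjoint X Y) (hcover : X ∪ Y = Finset.univ)
    (hX : X.card = n) (hY : Y.card = n)
    (hbip : ∀ a b, G.Adj a b → (a ∈ X ∧ b ∈ Y) ∨ (a ∈ Y ∧ b ∈ X))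
    (h1 : ∀ S ⊆ X, ∀ S' ⊆ Y, S'.card < S.card → S.card ≤ (n + 1) / 2 →
      ((S ×ˢ (Y \ S')).filter fun e => G.Adj e.1 e.2).card ≠ 0)
    (h2 : ∀ T' ⊆ X, ∀ T ⊆ Y, T'.card < T.card → T.card ≤ (n + 1) / 2 →
      ((T ×ˢ (X \ T')).filter fun e => G.Adj e.1 e.2).card ≠ 0) :
    ∃ M : G.Subgraph, M.IsPerfectMatching := by
  have hG : G.IsBipartiteWith X Y := ⟨disjoint_coe.mpr hdisj, fun a b => hbip a b⟩
  have hn : n ≤ 2 * ((n + 1) / 2) := by omega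
  have hXm : G.HallUpTo X ((n + 1) / 2) := hallUpTo_of_forall_exists_edge hG h1
  have hYm : G.HallUpTo Y ((n + 1) / 2) :=
    hallUpTo_of_forall_exists_edge hG.symm fun T hT T' hT' => h2 T' hT' T hT
  exact exists_isPerfectMatching_of_forall_ncard_le hG
    (ncard_le_ncard_iUnion_neighborSet_of_forall_card_le
      (hG.card_le_card_biUnion_neighborFinset hcover
        (fun _ => hXm.card_le_card_biUnion_neighborFinset hG hX hY hn hYm)
        (fun _ => hYm.card_le_card_biUnion_neighborFinset hG.symm hY hX hn hXm)))
end

section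
/- Fix g ∈ ℕ and k ≥ 0. There is a constant C(g, k) such that the following holds. Fix positive reals w, y, z, a descending sequence of vertex subsets V(K_N) = U₀ ⊇ ⋯ ⊇ U_k with n = |U_k|, and for 4 ≤ j ≤ g a collection 𝔉_j of sets of j−2 triangles of K_N which is (y, z)-well-spread with respect to this sequence. Let π be the weight system on the set of all triangles of K_N defined by π_T = w/|U_{lev(T)}|. Fix a nonempty set 𝓠 of triangles of K_N, an integer 4 ≤ j ≤ g, and an integer f ≥ 0, and let 𝔄 be the multiset of sets of triangles containing, for each 𝓔 ∈ 𝔉_j and each partition 𝓔 = 𝓠 ∪ 𝓩 ∪ 𝓕 with |𝓕| = f and all triangles of 𝓩 contained in U_k, one copy of 𝓕. Then ψ(𝔄) ≤ C(g, k)·z·w^f·n^{j−v^j(𝓠)−f}; moreover, if |𝓠| = 1 then ψ(𝔄) ≤ C(g, k)·y·w^f·n^{j−v^j(𝓠)−f}. -/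
open Finset
open scoped Classical

/-- The level of a triangle `T` with respect to the descending sequence
`U 0 ⊇ … ⊇ U k`: the largest `i ≤ k` with all vertices of `T` in `U i`. -/
def lev {N : ℕ} (U : ℕ → Finset (Fin N)) (k : ℕ) (T : Finset (Fin N)) : ℕ :=
  ((Finset.range (k + 1)).filter fun i => T ⊆ U i).sup id

/-- `v^j(𝓡)` for a nonempty set `𝓡` of at most `j - 2` triangles. -/
def vj {N : ℕ} (j : ℕ) (R : Finset (Finset (Fin N))) : ℕ :=
  if R.card = 1 ∨ R.card = j - 2 then R.card + 2 else R.card + 3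

/-- The triples of `E` are pairwise edge-disjoint. -/
def EdgeDisjointTris {N : ℕ} (E : Finset (Finset (Fin N))) : Prop :=
  ∀ t₁ ∈ E, ∀ t₂ ∈ E, t₁ ≠ t₂ → (t₁ ∩ t₂).card ≤ 1

/-- The collection `F` of sets of `j - 2` triangles of `K_N` is `(y, z)`-well-spread
with respect to the descending sequence `U 0 ⊇ … ⊇ U k` (conditions WS0–WS4). -/
def WellSpread {N : ℕ} (U : ℕ → Finset (Fin N)) (k j : ℕ) (y z : ℝ)
    (F : Finset (Finset (Finset (Fin N)))) : Prop :=
  -- WS0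
  (∀ E ∈ F, E.card = j - 2 ∧ (∀ t ∈ E, t.card = 3) ∧ EdgeDisjointTris E) ∧
  -- WS1
  (∀ R : Finset (Finset (Fin N)), R.Nonempty → (∀ t ∈ R, t.card = 3) → ∀ t' : ℕ → ℕ,
    ((F.filter fun E => R ⊆ E ∧ ∀ i < k,
        ((E \ R).filter fun T => lev U k T = i).card = t' i).card : ℝ) ≤
      z * ((U k).card : ℝ) ^
          ((j : ℤ) - (∑ i ∈ Finset.range k, (t' i : ℤ)) - (vj j R : ℤ)) *
        ∏ i ∈ Finset.range k, ((U i).card : ℝ) ^ t' i) ∧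
  -- WS2
  (∀ T T' : Finset (Fin N), T.card = 3 → T'.card = 3 → ∀ t' : ℕ → ℕ,
    (((F ×ˢ F).filter fun Ep => Ep.1 ≠ Ep.2 ∧ T ∈ Ep.1 ∧ T' ∈ Ep.2 ∧
        Ep.1 \ {T} = Ep.2 \ {T'} ∧ ∀ i < k,
        ((Ep.1 \ {T}).filter fun T'' => lev U k T'' = i).card = t' i).card : ℝ) ≤
      z * ((U k).card : ℝ) ^
          ((j : ℤ) - (∑ i ∈ Finset.range k, (t' i : ℤ)) - 4) *
        ∏ i ∈ Finset.range k, ((U i).card : ℝ) ^ t' i) ∧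
  -- WS3
  (j = 4 → ∀ T e : Finset (Fin N), T.card = 3 → e.card = 2 → ¬e ⊆ T →
    ((F.filter fun E => T ∈ E ∧ ∃ T' ∈ E, T' ≠ T ∧ lev U k T' = k ∧ e ⊆ T').card : ℝ)
      ≤ z) ∧
  -- WS4
  (∀ T : Finset (Fin N), T.card = 3 → ∀ t' : ℕ → ℕ,
    ((F.filter fun E => T ∈ E ∧ ∀ i < k,
        ((E \ {T}).filter fun T'' => lev U k T'' = i).card = t' i).card : ℝ) ≤
      y * ((U k).card : ℝ) ^
          ((j : ℤ) - (∑ i ∈ Finset.range k, (t' i : ℤ)) - 3) *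
        ∏ i ∈ Finset.range k, ((U i).card : ℝ) ^ t' i)

/-- The weight `ψ(𝔄)` of the multiset `𝔄 = 𝔄_{𝓠, j, f}^{(1)}` of configurations:
for each `𝓔 ∈ F` and each partition `𝓔 = 𝓠 ∪ 𝓩 ∪ 𝓕` with `|𝓕| = f` and all
triangles of `𝓩` inside `U k`, one copy of `𝓕` is taken, and each copy `𝓕`
contributes `∏_{T ∈ 𝓕} w / |U (lev T)|`. -/
noncomputable def psiA {N : ℕ} (U : ℕ → Finset (Fin N)) (k : ℕ) (w : ℝ)
    (F : Finset (Finset (Finset (Fin N)))) (Q : Finset (Finset (Fin N)))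
    (f : ℕ) : ℝ :=
  ((F.val.bind fun E =>
      if Q ⊆ E then
        ((E \ Q).powerset.filter fun Fs =>
          Fs.card = f ∧ ∀ t ∈ (E \ Q) \ Fs, t ⊆ U k).val
      else 0).map fun Fs => ∏ T ∈ Fs, w / ((U (lev U k T)).card : ℝ)).sum

/-!
Fix `𝓔 ⊇ 𝓠`. Every triangle of `𝓔 ∖ 𝓠` outside `U k` must lie in `𝓕`, so all admissible `𝓕`
have the same weight `w^f ∏_{i<k} |U_i|^{-t_i} · n^{Σ t - f}`, where `t` is the level profile of
`𝓔 ∖ 𝓠` below level `k`, and there are at most `2^g` of them. Grouping the `𝓔` by profile, WS1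
(WS4 when `|𝓠| = 1`) bounds the number of `𝓔` with profile `t` by
`z · n^{j - Σ t - v} ∏_{i<k} |U_i|^{t_i}`, which cancels against that weight, and there are at
most `(g+1)^(k+1)` profiles.
-/

lemma zpow_mul_zpow_le {α : Type*} [Semifield α] [LinearOrder α] [IsStrictOrderedRing α]
    {x : α} (hx : 0 ≤ x) (a b : ℤ) : x ^ a * x ^ b ≤ x ^ (a + b) := by
  rcases hx.eq_or_lt with rfl | hx
  · rcases eq_or_ne a 0 with rfl | ha
    · simp
    · rw [zero_zpow a ha, zero_mul]
      exact zpow_nonneg le_rfl _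
  · rw [zpow_add₀ hx.ne']

lemma card_le_pow_of_forall_le_of_eq_zero {P : Finset (ℕ → ℕ)} {m g : ℕ}
    (hle : ∀ p ∈ P, ∀ i, p i ≤ g) (hzero : ∀ p ∈ P, ∀ i, m ≤ i → p i = 0) :
    #P ≤ (g + 1) ^ m := by
  calc #P ≤ #(Fintype.piFinset fun _ : Fin m => range (g + 1)) := by
        refine card_le_card_of_injOn (fun p i => p i)
          (fun p hp => Fintype.mem_piFinset.mpr fun i =>
            mem_range.mpr (Nat.lt_succ_of_le (hle p hp i)))
          fun p hp q hq hpq => funext fun i => ?_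
        by_cases hi : i < m
        · exact congrFun hpq ⟨i, hi⟩
        · rw [hzero p hp i (not_lt.mp hi), hzero q hq i (not_lt.mp hi)]
    _ = (g + 1) ^ m := by simp

section Levels

variable {N : ℕ} (U : ℕ → Finset (Fin N)) (k : ℕ)

lemma lev_le (T : Finset (Fin N)) : lev U k T ≤ k :=
  Finset.sup_le fun _ hi => Nat.lt_succ_iff.mp (mem_range.mp (mem_filter.mp hi).1)

lemma lev_eq_of_subset {T : Finset (Fin N)} (h : T ⊆ U k) : lev U k T = k :=
  le_antisymm (lev_le U k T) (le_sup (f := id) (mem_filter.mpr ⟨self_mem_range_succ k, h⟩))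

def levelCount (S : Finset (Finset (Fin N))) (i : ℕ) : ℕ :=
  #{T ∈ S | lev U k T = i}

lemma levelCount_le_card (S : Finset (Finset (Fin N))) (i : ℕ) : levelCount U k S i ≤ #S :=
  card_filter_le _ _

lemma levelCount_eq_zero_of_lt {i : ℕ} (hi : k < i) (S : Finset (Finset (Fin N))) :
    levelCount U k S i = 0 :=
  card_eq_zero.mpr (filter_false_of_mem fun T _ => ((lev_le U k T).trans_lt hi).ne)

lemma sum_levelCount (S : Finset (Finset (Fin N))) :
    ∑ i ∈ range (k + 1), levelCount U k S i = #S :=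
  (card_eq_sum_card_fiberwise fun T _ => mem_range.mpr (Nat.lt_succ_of_le (lev_le U k T))).symm

lemma levelCount_eq_of_sdiff_subset {S Fs : Finset (Finset (Fin N))} (hFs : Fs ⊆ S)
    (hZ : ∀ T ∈ S \ Fs, T ⊆ U k) {i : ℕ} (hi : i < k) :
    levelCount U k Fs i = levelCount U k S i := by
  refine congrArg card ((filter_subset_filter _ hFs).antisymm fun T hT => ?_)
  obtain ⟨hTS, hTi⟩ := mem_filter.mp hT
  refine mem_filter.mpr ⟨?_, hTi⟩
  by_contra hTFs
  have := lev_eq_of_subset U k (hZ T (mem_sdiff.mpr ⟨hTS, hTFs⟩))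
  omega

lemma prod_div_card_lev (w : ℝ) (S : Finset (Finset (Fin N))) :
    ∏ T ∈ S, w / (#(U (lev U k T)) : ℝ) =
      w ^ #S * ∏ i ∈ range (k + 1), (#(U i) : ℝ) ^ (-(levelCount U k S i : ℤ)) := by
  rw [← prod_fiberwise_of_maps_to (g := lev U k) (t := range (k + 1))
      fun T _ => mem_range.mpr (Nat.lt_succ_of_le (lev_le U k T)),
    ← sum_levelCount U k S, ← prod_pow_eq_pow_sum, ← prod_mul_distrib]
  refine prod_congr rfl fun i _ => ?_
  rw [prod_congr rfl fun T hT => by rw [(mem_filter.mp hT).2], prod_const, div_pow,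
    div_eq_mul_inv, zpow_neg, zpow_natCast]
  rfl

/-- The common weight of the sets `Fs ⊆ S` of size `f` with `S \ Fs` inside `U k`, when `S` has
`p i` triangles of level `i` for `i < k`; the level-`k` count `f - Σ p` is kept in `ℤ`. -/
noncomputable def profileWeight (w : ℝ) (f : ℕ) (p : ℕ → ℕ) : ℝ :=
  w ^ f * (∏ i ∈ range k, (#(U i) : ℝ) ^ (-(p i : ℤ))) *
    (#(U k) : ℝ) ^ ((∑ i ∈ range k, (p i : ℤ)) - f)

lemma profileWeight_nonneg {w : ℝ} (hw : 0 ≤ w) (f : ℕ) (p : ℕ → ℕ) :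
    0 ≤ profileWeight U k w f p := by
  unfold profileWeight; positivity

lemma prod_div_card_lev_of_sdiff_subset {S Fs : Finset (Finset (Fin N))} (hFs : Fs ⊆ S)
    (hZ : ∀ T ∈ S \ Fs, T ⊆ U k) (w : ℝ) :
    ∏ T ∈ Fs, w / (#(U (lev U k T)) : ℝ) = profileWeight U k w #Fs (levelCount U k S) := by
  have hlow : ∀ i ∈ range k, levelCount U k Fs i = levelCount U k S i :=
    fun i hi => levelCount_eq_of_sdiff_subset U k hFs hZ (mem_range.mp hi)
  have htop : (levelCount U k Fs k : ℤ) = #Fs - ∑ i ∈ range k, (levelCount U k S i : ℤ) := by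
    rw [← sum_levelCount U k Fs, sum_range_succ, sum_congr rfl hlow]
    push_cast; ring
  rw [prod_div_card_lev, prod_range_succ, prod_congr rfl fun i hi => by rw [hlow i hi], htop,
    profileWeight, neg_sub, mul_assoc]

lemma sum_prod_div_card_lev_le {S : Finset (Finset (Fin N))} {g : ℕ} (hS : #S ≤ g) {w : ℝ}
    (hw : 0 ≤ w) (f : ℕ) :
    ∑ Fs ∈ S.powerset with #Fs = f ∧ ∀ T ∈ S \ Fs, T ⊆ U k, ∏ T ∈ Fs, w / (#(U (lev U k T)) : ℝ)
      ≤ 2 ^ g * profileWeight U k w f (levelCount U k S) := by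
  calc _ = ∑ Fs ∈ S.powerset with #Fs = f ∧ ∀ T ∈ S \ Fs, T ⊆ U k,
          profileWeight U k w f (levelCount U k S) := by
        refine sum_congr rfl fun Fs hFs => ?_
        obtain ⟨hFsS, rfl, hZ⟩ := mem_filter.mp hFs
        exact prod_div_card_lev_of_sdiff_subset U k (mem_powerset.mp hFsS) hZ w
    _ ≤ 2 ^ g * profileWeight U k w f (levelCount U k S) := by
        rw [sum_const, nsmul_eq_mul]
        gcongr
        · exact profileWeight_nonneg U k hw f _
        · exact_mod_cast (card_filter_le _ _).trans
            ((card_powerset S).le.trans (Nat.pow_le_pow_right two_pos hS))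

lemma card_mul_profileWeight_le {m j v f : ℕ} {c w : ℝ} (hc : 0 ≤ c) (hw : 0 ≤ w) {p : ℕ → ℕ}
    (hm : (m : ℝ) ≤ c * (#(U k) : ℝ) ^ ((j : ℤ) - ∑ i ∈ range k, (p i : ℤ) - v) *
      ∏ i ∈ range k, (#(U i) : ℝ) ^ p i) :
    m * profileWeight U k w f p ≤ c * w ^ f * (#(U k) : ℝ) ^ ((j : ℤ) - v - f) := by
  set n : ℝ := (#(U k) : ℝ)
  set s := ∑ i ∈ range k, (p i : ℤ)
  have hcancel : (∏ i ∈ range k, (#(U i) : ℝ) ^ p i) *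
      ∏ i ∈ range k, (#(U i) : ℝ) ^ (-(p i : ℤ)) ≤ 1 := by
    rw [← prod_mul_distrib]
    refine prod_le_one (fun i _ => by positivity) fun i _ => ?_
    simpa using zpow_mul_zpow_le (Nat.cast_nonneg (α := ℝ) #(U i)) (p i) (-(p i))
  have hpow : n ^ ((j : ℤ) - s - v) * n ^ (s - f) ≤ n ^ ((j : ℤ) - v - f) := by
    simpa [sub_add_sub_cancel', sub_right_comm] using
      zpow_mul_zpow_le (Nat.cast_nonneg (α := ℝ) #(U k)) ((j : ℤ) - s - v) (s - f)
  calc m * profileWeight U k w f p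
      ≤ (c * n ^ ((j : ℤ) - s - v) * ∏ i ∈ range k, (#(U i) : ℝ) ^ p i) *
          profileWeight U k w f p := by
        gcongr; exact profileWeight_nonneg U k hw f p
    _ = c * w ^ f * ((n ^ ((j : ℤ) - s - v) * n ^ (s - f)) *
          ((∏ i ∈ range k, (#(U i) : ℝ) ^ p i) *
            ∏ i ∈ range k, (#(U i) : ℝ) ^ (-(p i : ℤ)))) := by
        rw [profileWeight]; ring
    _ ≤ c * w ^ f * (n ^ ((j : ℤ) - v - f) * 1) := by gcongr
    _ = c * w ^ f * n ^ ((j : ℤ) - v - f) := by rw [mul_one]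

lemma psiA_eq_sum (w : ℝ) (F : Finset (Finset (Finset (Fin N)))) (Q : Finset (Finset (Fin N)))
    (f : ℕ) :
    psiA U k w F Q f = ∑ E ∈ F with Q ⊆ E,
      ∑ Fs ∈ (E \ Q).powerset with #Fs = f ∧ ∀ T ∈ (E \ Q) \ Fs, T ⊆ U k,
        ∏ T ∈ Fs, w / (#(U (lev U k T)) : ℝ) := by
  rw [psiA, Multiset.map_bind, Multiset.sum_bind, sum_filter]
  refine sum_congr rfl fun E _ => ?_
  split_ifs
  · rfl
  · simp

theorem psiA_le_of_card_filter_le {g j v f : ℕ} {c w : ℝ} (hc : 0 ≤ c) (hw : 0 ≤ w)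
    {F : Finset (Finset (Finset (Fin N)))} (hF : ∀ E ∈ F, #E ≤ g)
    {Q : Finset (Finset (Fin N))}
    (hcount : ∀ p : ℕ → ℕ,
      (#{E ∈ F | Q ⊆ E ∧ ∀ i < k, levelCount U k (E \ Q) i = p i} : ℝ) ≤
        c * (#(U k) : ℝ) ^ ((j : ℤ) - ∑ i ∈ range k, (p i : ℤ) - v) *
          ∏ i ∈ range k, (#(U i) : ℝ) ^ p i) :
    psiA U k w F Q f ≤
      2 ^ g * (g + 1) ^ (k + 1) * c * w ^ f * (#(U k) : ℝ) ^ ((j : ℤ) - v - f) := by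
  set F' := {E ∈ F | Q ⊆ E}
  set profile := fun E => levelCount U k (E \ Q)
  have hS : ∀ E ∈ F', #(E \ Q) ≤ g := fun E hE =>
    (card_le_card sdiff_subset).trans (hF E (mem_filter.mp hE).1)
  have hprofiles : #(F'.image profile) ≤ (g + 1) ^ (k + 1) :=
    card_le_pow_of_forall_le_of_eq_zero
      (forall_mem_image.mpr fun E hE i => (levelCount_le_card U k _ i).trans (hS E hE))
      (forall_mem_image.mpr fun E _ i hi => levelCount_eq_zero_of_lt U k hi _)
  calc psiA U k w F Q f ≤ ∑ E ∈ F', 2 ^ g * profileWeight U k w f (profile E) := by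
        rw [psiA_eq_sum]
        exact sum_le_sum fun E hE => sum_prod_div_card_lev_le U k (hS E hE) hw f
    _ = 2 ^ g * ∑ p ∈ F'.image profile,
          (#{E ∈ F' | profile E = p} : ℝ) * profileWeight U k w f p := by
        rw [← mul_sum, sum_comp]
        simp only [nsmul_eq_mul]
    _ ≤ 2 ^ g * ∑ _p ∈ F'.image profile, c * w ^ f * (#(U k) : ℝ) ^ ((j : ℤ) - v - f) := by
        refine mul_le_mul_of_nonneg_left (sum_le_sum fun p _ => ?_) (by positivity)
        refine card_mul_profileWeight_le U k hc hw
          ((Nat.cast_le.mpr (card_le_card fun E => ?_)).trans (hcount p))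
        simp only [F', profile, mem_filter]
        exact fun ⟨⟨hEF, hQE⟩, hp⟩ => ⟨hEF, hQE, fun i _ => congrFun hp i⟩
    _ = 2 ^ g * #(F'.image profile) * (c * w ^ f * (#(U k) : ℝ) ^ ((j : ℤ) - v - f)) := by
        rw [sum_const, nsmul_eq_mul]; ring
    _ ≤ 2 ^ g * (g + 1) ^ (k + 1) * (c * w ^ f * (#(U k) : ℝ) ^ ((j : ℤ) - v - f)) := by
        gcongr
        exact_mod_cast hprofiles
    _ = 2 ^ g * (g + 1) ^ (k + 1) * c * w ^ f * (#(U k) : ℝ) ^ ((j : ℤ) - v - f) := by ring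

end Levels

lemma vj_singleton {N : ℕ} (j : ℕ) (T : Finset (Fin N)) : vj j {T} = 3 := by
  simp [vj]

/-- Weight bound for well-spread collections (general moments, part 1): for a
`(y, z)`-well-spread collection `F` of sets of `j - 2` triangles with respect to
`U 0 ⊇ ⋯ ⊇ U k`, with the weight system `π_T = w / |U (lev T)|`, the weight of the
multiset `𝔄_{𝓠, j, f}^{(1)}` satisfies `ψ(𝔄) ≤ C(g,k) · z · w^f · n^{j - v^j(𝓠) - f}`,
and moreover `ψ(𝔄) ≤ C(g,k) · y · w^f · n^{j - v^j(𝓠) - f}` when `|𝓠| = 1`. -/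
theorem wellspread_weight_bound (g k : ℕ) :
    ∃ Cgk : ℝ, 0 < Cgk ∧
    ∀ (N : ℕ) (U : ℕ → Finset (Fin N)),
      U 0 = Finset.univ → (∀ i < k, U (i + 1) ⊆ U i) →
    ∀ w y z : ℝ, 0 < w → 0 < y → 0 < z →
    ∀ j : ℕ, 4 ≤ j → j ≤ g →
    ∀ F : Finset (Finset (Finset (Fin N))), WellSpread U k j y z F →
    ∀ Q : Finset (Finset (Fin N)), Q.Nonempty → (∀ t ∈ Q, t.card = 3) →
    ∀ f : ℕ,
      psiA U k w F Q f ≤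
        Cgk * z * w ^ f *
          ((U k).card : ℝ) ^ ((j : ℤ) - (vj j Q : ℤ) - (f : ℤ)) ∧
      (Q.card = 1 →
        psiA U k w F Q f ≤
          Cgk * y * w ^ f *
            ((U k).card : ℝ) ^ ((j : ℤ) - (vj j Q : ℤ) - (f : ℤ))) := by
  refine ⟨2 ^ g * (g + 1) ^ (k + 1), by positivity, ?_⟩
  intro N U _ _ w y z hw hy hz j _ hjg F hWS Q hQ hQ3 f
  obtain ⟨hWS0, hWS1, -, -, hWS4⟩ := hWS
  have hF : ∀ E ∈ F, #E ≤ g := fun E hE => by have := (hWS0 E hE).1; omega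
  refine ⟨psiA_le_of_card_filter_le U k hz.le hw.le hF (hWS1 Q hQ hQ3), fun hQ1 => ?_⟩
  obtain ⟨T, rfl⟩ := card_eq_one.mp hQ1
  have hT := hQ3 T (mem_singleton_self T)
  rw [vj_singleton]
  exact psiA_le_of_card_filter_le U k hy.le hw.le hF fun p => by
    simpa [singleton_subset_iff, levelCount] using hWS4 T hT p
end
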